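/- arXiv:2108.03837 — 5 statements merged into one kernel-verified Lean document; each statement's English description precedes it below -/
import Mathlib

section
/- In the AMF framework, for any round t ∈ [T], any transcript through round t, and any η ≤ 1/(2C), the surrogate loss satisfies L^t ≤ (4η²C² + 1)·L^{t−1} + η·Σ_{j∈[d]} exp(η·R^{t−1}_j)·( ℓ^t_j(x^t, y^t) − w^t_A ). -/
open scoped BigOperators

noncomputable section

/-- Finite-dimensional Euclidean space. -/
abbrev Euc (n : ℕ) := EuclideanSpace ℝ (Fin n)

/-- The Adversary-Moves-First value of an environment `(X, Y, ℓ)`: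
`w_A = sup_{y ∈ Y} inf_{x ∈ X} max_{j} ℓ_j(x, y)`. -/
noncomputable def amfValue {N M d : ℕ} (X : Set (Euc N)) (Y : Set (Euc M))
    (ℓ : Euc N → Euc M → Fin d → ℝ) : ℝ :=
  sSup ((fun y => sInf ((fun x => ⨆ j, ℓ x y j) '' X)) '' Y)

/-- The AMF regret of coordinate `j` accumulated over the rounds in `S`:
`Σ_{s ∈ S} ℓ^s_j(x^s, y^s) − Σ_{s ∈ S} w^s_A`. -/
noncomputable def amfRegret {T d N M : ℕ} (X : Fin T → Set (Euc N)) (Y : Fin T → Set (Euc M))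
    (ℓ : Fin T → Euc N → Euc M → Fin d → ℝ)
    (x : Fin T → Euc N) (y : Fin T → Euc M) (S : Finset (Fin T)) (j : Fin d) : ℝ :=
  (∑ s ∈ S, ℓ s (x s) (y s) j) - ∑ s ∈ S, amfValue (X s) (Y s) (ℓ s)

/-- The surrogate loss over the rounds in `S`: `Σ_j exp(η · R_j(S))`.
(Over the empty set of rounds this equals `d`, matching `L^0 = d`.) -/
noncomputable def surrogateLoss {T d N M : ℕ} (η : ℝ)
    (X : Fin T → Set (Euc N)) (Y : Fin T → Set (Euc M))
    (ℓ : Fin T → Euc N → Euc M → Fin d → ℝ)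
    (x : Fin T → Euc N) (y : Fin T → Euc M) (S : Finset (Fin T)) : ℝ :=
  ∑ j : Fin d, Real.exp (η * amfRegret X Y ℓ x y S j)


lemma exp_le_quad {x : ℝ} (hx : |x| ≤ 1) : Real.exp x ≤ 1 + x + x ^ 2 := by
  have h := Real.exp_bound hx (n := 2) (by norm_num)
  have h2 : ∑ m ∈ Finset.range 2, x ^ m / m.factorial = 1 + x := by
    simp [Finset.sum_range_succ]
  rw [h2] at h
  have h3 := (abs_le.1 h).2
  have h4 : |x| ^ 2 = x ^ 2 := sq_abs x
  norm_num [Nat.factorial] at h3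
  nlinarith [sq_nonneg x]

lemma abs_amfValue_le {N M d : ℕ} (hd : 1 ≤ d) (X : Set (Euc N))
    (Y : Set (Euc M)) (ℓ : Euc N → Euc M → Fin d → ℝ)
    (hXne : X.Nonempty) (hYne : Y.Nonempty) (C : ℝ)
    (hbdd : ∀ x ∈ X, ∀ y ∈ Y, ∀ j, |ℓ x y j| ≤ C) :
    |amfValue X Y ℓ| ≤ C := by
  haveI : Nonempty (Fin d) := ⟨⟨0, hd⟩⟩
  have hg : ∀ y ∈ Y, -C ≤ sInf ((fun x => ⨆ j, ℓ x y j) '' X) ∧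
      sInf ((fun x => ⨆ j, ℓ x y j) '' X) ≤ C := by
    intro y hy
    have hfle : ∀ x ∈ X, (⨆ j, ℓ x y j) ≤ C := fun x hx =>
      ciSup_le fun j => (abs_le.1 (hbdd x hx y hy j)).2
    have hfge : ∀ x ∈ X, -C ≤ (⨆ j, ℓ x y j) := by
      intro x hx
      refine le_trans (abs_le.1 (hbdd x hx y hy ⟨0, hd⟩)).1
        (le_ciSup (Set.Finite.bddAbove (Set.finite_range _)) _)
    constructor
    · exact le_csInf (hXne.image _) (by rintro _ ⟨x, hx, rfl⟩; exact hfge x hx)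
    · obtain ⟨x0, hx0⟩ := hXne
      refine le_trans (csInf_le ⟨-C, ?_⟩ ⟨x0, hx0, rfl⟩) (hfle x0 hx0)
      rintro _ ⟨x, hx, rfl⟩; exact hfge x hx
  rw [amfValue, abs_le]
  constructor
  · obtain ⟨y0, hy0⟩ := hYne
    refine le_trans (hg y0 hy0).1 (le_csSup ⟨C, ?_⟩ ⟨y0, hy0, rfl⟩)
    rintro _ ⟨y, hy, rfl⟩; exact (hg y hy).2
  · exact csSup_le (hYne.image _) (by rintro _ ⟨y, hy, rfl⟩; exact (hg y hy).2)

/-- In the AMF framework, for any round `t`, any transcript through round `t`,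
and any `η ≤ 1/(2C)`:
`L^t ≤ (4η²C² + 1)·L^{t−1} + η · Σ_j exp(η·R^{t−1}_j)·(ℓ^t_j(x^t,y^t) − w^t_A)`. -/
theorem surrogate_loss_one_step
    (T d N M : ℕ) (hd : 1 ≤ d) (C : ℝ) (hC : 0 < C)
    (X : Fin T → Set (Euc N)) (Y : Fin T → Set (Euc M))
    (ℓ : Fin T → Euc N → Euc M → Fin d → ℝ)
    (hXconv : ∀ t, Convex ℝ (X t)) (hXcomp : ∀ t, IsCompact (X t))
    (hXne : ∀ t, (X t).Nonempty)
    (hYconv : ∀ t, Convex ℝ (Y t)) (hYcomp : ∀ t, IsCompact (Y t))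
    (hYne : ∀ t, (Y t).Nonempty)
    (hcont : ∀ t j, ContinuousOn (fun p : Euc N × Euc M => ℓ t p.1 p.2 j) (X t ×ˢ Y t))
    (hbdd : ∀ t j, ∀ x ∈ X t, ∀ y ∈ Y t, |ℓ t x y j| ≤ C)
    (hconv : ∀ t j, ∀ y ∈ Y t, ConvexOn ℝ (X t) (fun x => ℓ t x y j))
    (hconc : ∀ t j, ∀ x ∈ X t, ConcaveOn ℝ (Y t) (fun y => ℓ t x y j))
    (x : Fin T → Euc N) (y : Fin T → Euc M)
    (hx : ∀ t, x t ∈ X t) (hy : ∀ t, y t ∈ Y t)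
    (η : ℝ) (hη : η ∈ Set.Ioo (0 : ℝ) 1) (hηC : η ≤ 1 / (2 * C))
    (t : Fin T) :
    surrogateLoss η X Y ℓ x y (Finset.Iic t) ≤
      (4 * η ^ 2 * C ^ 2 + 1) * surrogateLoss η X Y ℓ x y (Finset.Iio t) +
        η * ∑ j : Fin d, Real.exp (η * amfRegret X Y ℓ x y (Finset.Iio t) j) *
          (ℓ t (x t) (y t) j - amfValue (X t) (Y t) (ℓ t)) := by
  have hη0 : 0 < η := hη.1
  have hC2 : (0:ℝ) < 2 * C := by linarith
  have hw : |amfValue (X t) (Y t) (ℓ t)| ≤ C := by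
    apply abs_amfValue_le hd _ _ _ (hXne t) (hYne t) C
    intro a ha b hb j; exact hbdd t j a ha b hb
  set w := amfValue (X t) (Y t) (ℓ t) with hwdef
  have hsplit : ∀ j, amfRegret X Y ℓ x y (Finset.Iic t) j =
      amfRegret X Y ℓ x y (Finset.Iio t) j + (ℓ t (x t) (y t) j - w) := by
    intro j
    have h1 : (Finset.Iic t) = insert t (Finset.Iio t) := (Finset.Iio_insert t).symm
    have h2 : t ∉ Finset.Iio t := by simp
    rw [hwdef]
    simp only [amfRegret, h1, Finset.sum_insert h2]
    ring
  have key : ∀ j, Real.exp (η * amfRegret X Y ℓ x y (Finset.Iic t) j) ≤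
      (4 * η ^ 2 * C ^ 2 + 1) * Real.exp (η * amfRegret X Y ℓ x y (Finset.Iio t) j)
      + η * (Real.exp (η * amfRegret X Y ℓ x y (Finset.Iio t) j) * (ℓ t (x t) (y t) j - w)) := by
    intro j
    set R := amfRegret X Y ℓ x y (Finset.Iio t) j with hR
    set z := ℓ t (x t) (y t) j - w with hzdef
    have hzb : |z| ≤ 2 * C := by
      calc |z| ≤ |ℓ t (x t) (y t) j| + |w| := abs_sub _ _
        _ ≤ C + C := add_le_add (hbdd t j (x t) (hx t) (y t) (hy t)) hw
        _ = 2 * C := by ring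
    have hηz : |η * z| ≤ 1 := by
      rw [abs_mul, abs_of_pos hη0]
      calc η * |z| ≤ η * (2 * C) := by nlinarith
        _ ≤ 1 := (le_div_iff₀ hC2).mp hηC
    have hexp := exp_le_quad hηz
    have hpos := Real.exp_pos (η * R)
    have hq : (η * z) ^ 2 ≤ 4 * η ^ 2 * C ^ 2 := by
      have h1 : z ^ 2 ≤ (2 * C) ^ 2 := by nlinarith [sq_abs z, abs_nonneg z]
      nlinarith [sq_nonneg η]
    rw [hsplit j, mul_add, Real.exp_add]
    calc Real.exp (η * R) * Real.exp (η * z)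
        ≤ Real.exp (η * R) * (1 + η * z + (η * z) ^ 2) :=
          mul_le_mul_of_nonneg_left hexp hpos.le
      _ ≤ (4 * η ^ 2 * C ^ 2 + 1) * Real.exp (η * R) + η * (Real.exp (η * R) * z) := by
          nlinarith
  simp only [surrogateLoss]
  rw [Finset.mul_sum, Finset.mul_sum, ← Finset.sum_add_distrib]
  exact Finset.sum_le_sum fun j _ => key j


end
end

section
/- In the AMF framework, for any η ≤ 1/(2C): at every round t, given any history of play through round t−1, there exists x^t ∈ X^t such that for all y ∈ Y^t, Σ_{j∈[d]} exp(η·R^{t−1}_j)·( ℓ^t_j(x^t, y) − w^t_A ) ≤ 0. Consequently, a Learner who plays such a point at every round guarantees, against any choices y^1 ∈ Y^1, …, y^T ∈ Y^T of the Adversary, that the final surrogate loss satisfies L^T ≤ d·(4η²C² + 1)^T. -/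
/-!
For (a), the weighted excess `G x y = ∑ⱼ wⱼ (ℓⱼ(x, y) − w_A)` with nonnegative weights is convex in
`x` and concave in `y`, so Sion's minimax theorem gives a saddle point `(a, b)`. At `b` some `x`
has every coordinate at most `w_A`, hence `G a y ≤ G x b ≤ 0` for every `y`.

For (b), each coordinate of the regret moves by at most `2C` per round, and `η · 2C ≤ 1`, so
`exp z ≤ 1 + z + z²` bounds the new surrogate loss by `L^{t-1}` plus `η` times the weighted sum of
(a), which is nonpositive, plus `4η²C² L^{t-1}`. Hence `L^t ≤ (1 + 4η²C²) L^{t-1}` and `L^0 = d`.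
-/
open scoped BigOperators

noncomputable section

open Finset Set Real

lemma csSup_mem_Icc {α : Type*} [ConditionallyCompleteLattice α] {s : Set α} {a b : α}
    (hs : s.Nonempty) (h : s ⊆ Icc a b) : sSup s ∈ Icc a b :=
  ⟨hs.elim fun _ hz => (h hz).1.trans (le_csSup ⟨b, fun _ hw => (h hw).2⟩ hz),
    csSup_le hs fun _ hw => (h hw).2⟩

lemma csInf_mem_Icc {α : Type*} [ConditionallyCompleteLattice α] {s : Set α} {a b : α}
    (hs : s.Nonempty) (h : s ⊆ Icc a b) : sInf s ∈ Icc a b :=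
  ⟨le_csInf hs fun _ hw => (h hw).1,
    hs.elim fun _ hz => (csInf_le ⟨a, fun _ hw => (h hw).1⟩ hz).trans (h hz).2⟩

lemma ConvexOn.finset_sum {E ι : Type*} [AddCommGroup E] [Module ℝ E] {s : Set E}
    {t : Finset ι} {f : ι → E → ℝ} (hs : Convex ℝ s) (h : ∀ i ∈ t, ConvexOn ℝ s (f i)) :
    ConvexOn ℝ s fun x => ∑ i ∈ t, f i x := by
  classical
  induction t using Finset.induction_on with
  | empty => simpa using convexOn_const (0 : ℝ) hs
  | insert i t hi ih =>
    simp only [sum_insert hi]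
    exact (h i (mem_insert_self i t)).add (ih fun j hj => h j (mem_insert_of_mem hj))

lemma ConcaveOn.finset_sum {E ι : Type*} [AddCommGroup E] [Module ℝ E] {s : Set E}
    {t : Finset ι} {f : ι → E → ℝ} (hs : Convex ℝ s) (h : ∀ i ∈ t, ConcaveOn ℝ s (f i)) :
    ConcaveOn ℝ s fun x => ∑ i ∈ t, f i x := by
  classical
  induction t using Finset.induction_on with
  | empty => simpa using concaveOn_const (0 : ℝ) hs
  | insert i t hi ih =>
    simp only [sum_insert hi]
    exact (h i (mem_insert_self i t)).add (ih fun j hj => h j (mem_insert_of_mem hj))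

lemma Real.exp_le_one_add_add_sq {z : ℝ} (hz : |z| ≤ 1) : exp z ≤ 1 + z + z ^ 2 := by
  linarith [(abs_le.1 (abs_exp_sub_one_sub_id_le hz)).2]

lemma sum_mul_exp_le_of_sum_mul_nonpos {ι : Type*} (s : Finset ι) {w δ : ι → ℝ} {η D : ℝ}
    (hw : ∀ i ∈ s, 0 ≤ w i) (hη : 0 ≤ η) (hδ : ∀ i ∈ s, |δ i| ≤ D) (hηD : η * D ≤ 1)
    (hsum : ∑ i ∈ s, w i * δ i ≤ 0) :
    ∑ i ∈ s, w i * exp (η * δ i) ≤ (1 + η ^ 2 * D ^ 2) * ∑ i ∈ s, w i := by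
  have hterm : ∀ i ∈ s, w i * exp (η * δ i) ≤ w i + η * (w i * δ i) + (η * D) ^ 2 * w i := by
    intro i hi
    have hz : |η * δ i| ≤ η * D := by
      rw [abs_mul, abs_of_nonneg hη]; exact mul_le_mul_of_nonneg_left (hδ i hi) hη
    have hsq : (η * δ i) ^ 2 ≤ (η * D) ^ 2 := by
      rw [← sq_abs]; exact pow_le_pow_left₀ (abs_nonneg _) hz 2
    have hexp := exp_le_one_add_add_sq (hz.trans hηD)
    nlinarith [mul_le_mul_of_nonneg_left hexp (hw i hi), mul_le_mul_of_nonneg_left hsq (hw i hi)]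
  calc ∑ i ∈ s, w i * exp (η * δ i)
      ≤ ∑ i ∈ s, (w i + η * (w i * δ i) + (η * D) ^ 2 * w i) := sum_le_sum hterm
    _ = ∑ i ∈ s, w i + η * ∑ i ∈ s, w i * δ i + (η * D) ^ 2 * ∑ i ∈ s, w i := by
      rw [sum_add_distrib, sum_add_distrib, mul_sum, mul_sum]
    _ ≤ (1 + η ^ 2 * D ^ 2) * ∑ i ∈ s, w i := by
      nlinarith [mul_nonpos_of_nonneg_of_nonpos hη hsum]

lemma le_pow_mul_of_forall_Iic_le {T : ℕ} (Φ : Finset (Fin T) → ℝ) {B : ℝ} (hB : 0 ≤ B)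
    (hstep : ∀ t, Φ (Iic t) ≤ B * Φ (Iio t)) : Φ univ ≤ B ^ T * Φ ∅ := by
  suffices h : ∀ n ≤ T, Φ {s | (s : ℕ) < n} ≤ B ^ n * Φ ∅ by
    simpa using h T le_rfl
  intro n
  induction n with
  | zero => simp
  | succ n ih =>
    intro hn
    set t : Fin T := ⟨n, hn⟩
    have hIio : ({s | (s : ℕ) < n} : Finset (Fin T)) = Finset.Iio t := by
      ext; simp [Fin.lt_def, t]
    have hIic : ({s | (s : ℕ) < n + 1} : Finset (Fin T)) = Finset.Iic t := by
      ext; simp [Fin.le_def, t]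
    rw [hIic, pow_succ', mul_assoc]
    exact (hstep t).trans (mul_le_mul_of_nonneg_left (hIio ▸ ih (by omega)) hB)

section AmfValue

variable {N M d : ℕ} {C : ℝ} {X : Set (Euc N)} {Y : Set (Euc M)}
  {ℓ : Euc N → Euc M → Fin d → ℝ}

lemma sInf_image_iSup_mem_Icc [Nonempty (Fin d)] (hX : X.Nonempty) {y : Euc M}
    (hbdd : ∀ j, ∀ x ∈ X, |ℓ x y j| ≤ C) :
    sInf ((fun x => ⨆ j, ℓ x y j) '' X) ∈ Icc (-C) C :=
  csInf_mem_Icc (hX.image _) <| image_subset_iff.2 fun x hx =>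
    csSup_mem_Icc (range_nonempty _) (range_subset_iff.2 fun j => abs_le.1 (hbdd j x hx))

lemma amfValue_mem_Icc [Nonempty (Fin d)] (hX : X.Nonempty) (hY : Y.Nonempty)
    (hbdd : ∀ j, ∀ x ∈ X, ∀ y ∈ Y, |ℓ x y j| ≤ C) : amfValue X Y ℓ ∈ Icc (-C) C :=
  csSup_mem_Icc (hY.image _) <| image_subset_iff.2 fun y hy =>
    sInf_image_iSup_mem_Icc hX fun j x hx => hbdd j x hx y hy

lemma abs_sub_amfValue_le (hX : X.Nonempty) (hY : Y.Nonempty)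
    (hbdd : ∀ j, ∀ x ∈ X, ∀ y ∈ Y, |ℓ x y j| ≤ C) {x : Euc N} (hx : x ∈ X) {y : Euc M}
    (hy : y ∈ Y) (j : Fin d) : |ℓ x y j - amfValue X Y ℓ| ≤ 2 * C := by
  have : Nonempty (Fin d) := ⟨j⟩
  have hA := amfValue_mem_Icc hX hY hbdd
  have hℓ := abs_le.1 (hbdd j x hx y hy)
  rw [abs_le]
  constructor <;> linarith [hA.1, hA.2]

lemma exists_forall_le_amfValue (hXcomp : IsCompact X) (hX : X.Nonempty)
    (hbdd : ∀ j, ∀ x ∈ X, ∀ y ∈ Y, |ℓ x y j| ≤ C) {y : Euc M} (hy : y ∈ Y)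
    (hcont : ∀ j, ContinuousOn (fun x => ℓ x y j) X) :
    ∃ x ∈ X, ∀ j, ℓ x y j ≤ amfValue X Y ℓ := by
  rcases isEmpty_or_nonempty (Fin d) with hd | hd
  · obtain ⟨x, hx⟩ := hX
    exact ⟨x, hx, isEmptyElim⟩
  have hlsc : LowerSemicontinuousOn (fun x => ⨆ j, ℓ x y j) X :=
    lowerSemicontinuousOn_ciSup (fun _ _ => (finite_range _).bddAbove)
      fun j => (hcont j).lowerSemicontinuousOn
  obtain ⟨x, hx, hmin⟩ := hlsc.exists_isMinOn hX hXcomp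
  refine ⟨x, hx, fun j => ?_⟩
  calc ℓ x y j ≤ ⨆ j, ℓ x y j := le_ciSup (finite_range _).bddAbove j
    _ ≤ sInf ((fun x => ⨆ j, ℓ x y j) '' X) :=
      le_csInf (hX.image _) (forall_mem_image.2 fun _ hx' => hmin hx')
    _ ≤ amfValue X Y ℓ :=
      le_csSup ⟨C, forall_mem_image.2 fun y' hy' =>
        (sInf_image_iSup_mem_Icc hX fun j x hx => hbdd j x hx y' hy').2⟩ (mem_image_of_mem _ hy)

theorem exists_forall_sum_mul_sub_amfValue_nonpos
    (hXconv : Convex ℝ X) (hXcomp : IsCompact X) (hX : X.Nonempty)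
    (hYconv : Convex ℝ Y) (hYcomp : IsCompact Y) (hY : Y.Nonempty)
    (hcont : ∀ j, ContinuousOn (fun p : Euc N × Euc M => ℓ p.1 p.2 j) (X ×ˢ Y))
    (hbdd : ∀ j, ∀ x ∈ X, ∀ y ∈ Y, |ℓ x y j| ≤ C)
    (hconv : ∀ j, ∀ y ∈ Y, ConvexOn ℝ X fun x => ℓ x y j)
    (hconc : ∀ j, ∀ x ∈ X, ConcaveOn ℝ Y fun y => ℓ x y j)
    (w : Fin d → ℝ) (hw : ∀ j, 0 ≤ w j) :
    ∃ x ∈ X, ∀ y ∈ Y, ∑ j, w j * (ℓ x y j - amfValue X Y ℓ) ≤ 0 := by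
  set G : Euc N → Euc M → ℝ := fun x y => ∑ j, w j * (ℓ x y j - amfValue X Y ℓ)
  have hcontX : ∀ y ∈ Y, ∀ j, ContinuousOn (fun x => ℓ x y j) X := fun y hy j =>
    (hcont j).uncurry_right (f := fun x y => ℓ x y j) y hy
  have hcontY : ∀ x ∈ X, ∀ j, ContinuousOn (fun y => ℓ x y j) Y := fun x hx j =>
    (hcont j).uncurry_left (f := fun x y => ℓ x y j) x hx
  have hGconv : ∀ y ∈ Y, ConvexOn ℝ X fun x => G x y := fun y hy =>
    ConvexOn.finset_sum hXconv fun j _ => ((hconv j y hy).add_const _).smul (hw j)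
  have hGconc : ∀ x ∈ X, ConcaveOn ℝ Y fun y => G x y := fun x hx =>
    ConcaveOn.finset_sum hYconv fun j _ => ((hconc j x hx).add_const _).smul (hw j)
  obtain ⟨a, ha, b, hb, hsaddle⟩ := Sion.exists_isSaddlePointOn (f := G) hX hXconv hXcomp
    (fun y hy => (continuousOn_finsetSum _ fun j _ =>
      continuousOn_const.mul ((hcontX y hy j).sub continuousOn_const)).lowerSemicontinuousOn)
    (fun y hy => (hGconv y hy).quasiconvexOn) hYconv hY hYcomp
    (fun x hx => (continuousOn_finsetSum _ fun j _ =>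
      continuousOn_const.mul ((hcontY x hx j).sub continuousOn_const)).upperSemicontinuousOn)
    (fun x hx => (hGconc x hx).quasiconcaveOn)
  obtain ⟨x, hx, hxA⟩ := exists_forall_le_amfValue hXcomp hX hbdd hb (hcontX b hb)
  refine ⟨a, ha, fun y hy => (hsaddle x hx y hy).trans ?_⟩
  exact sum_nonpos fun j _ => mul_nonpos_of_nonneg_of_nonpos (hw j) (sub_nonpos.2 (hxA j))

end AmfValue

section AmfRegret

variable {T d N M : ℕ} {X : Fin T → Set (Euc N)} {Y : Fin T → Set (Euc M)}
  {ℓ : Fin T → Euc N → Euc M → Fin d → ℝ} {x : Fin T → Euc N} {y : Fin T → Euc M}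

@[simp]
lemma amfRegret_empty (j : Fin d) : amfRegret X Y ℓ x y ∅ j = 0 := by
  simp [amfRegret]

lemma amfRegret_Iic (t : Fin T) (j : Fin d) :
    amfRegret X Y ℓ x y (Finset.Iic t) j =
      amfRegret X Y ℓ x y (Finset.Iio t) j + (ℓ t (x t) (y t) j - amfValue (X t) (Y t) (ℓ t)) := by
  rw [← Finset.Iio_insert, amfRegret, amfRegret, sum_insert Finset.notMem_Iio_self,
    sum_insert Finset.notMem_Iio_self]
  ring

lemma sum_exp_amfRegret_Iic_le {C η : ℝ} (hη : 0 ≤ η) (hηC : η * (2 * C) ≤ 1) {t : Fin T}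
    (hX : (X t).Nonempty) (hY : (Y t).Nonempty)
    (hbdd : ∀ j, ∀ x ∈ X t, ∀ y ∈ Y t, |ℓ t x y j| ≤ C) (hx : x t ∈ X t) (hy : y t ∈ Y t)
    (hstep : ∑ j, exp (η * amfRegret X Y ℓ x y (Finset.Iio t) j) *
      (ℓ t (x t) (y t) j - amfValue (X t) (Y t) (ℓ t)) ≤ 0) :
    ∑ j, exp (η * amfRegret X Y ℓ x y (Finset.Iic t) j) ≤
      (4 * η ^ 2 * C ^ 2 + 1) * ∑ j, exp (η * amfRegret X Y ℓ x y (Finset.Iio t) j) := by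
  have h := sum_mul_exp_le_of_sum_mul_nonpos univ (fun j _ => (exp_pos _).le) hη
    (fun j _ => abs_sub_amfValue_le hX hY hbdd hx hy j) hηC hstep
  simp only [amfRegret_Iic, mul_add, exp_add]
  convert h using 2
  ring

end AmfRegret

theorem amf_minimax_step_and_surrogate_bound_general
    (T d N M : ℕ) (C : ℝ)
    (X : Fin T → Set (Euc N)) (Y : Fin T → Set (Euc M))
    (ℓ : Fin T → Euc N → Euc M → Fin d → ℝ)
    (hXconv : ∀ t, Convex ℝ (X t)) (hXcomp : ∀ t, IsCompact (X t))
    (hXne : ∀ t, (X t).Nonempty)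
    (hYconv : ∀ t, Convex ℝ (Y t)) (hYcomp : ∀ t, IsCompact (Y t))
    (hYne : ∀ t, (Y t).Nonempty)
    (hcont : ∀ t j, ContinuousOn (fun p : Euc N × Euc M => ℓ t p.1 p.2 j) (X t ×ˢ Y t))
    (hbdd : ∀ t j, ∀ x ∈ X t, ∀ y ∈ Y t, |ℓ t x y j| ≤ C)
    (hconv : ∀ t j, ∀ y ∈ Y t, ConvexOn ℝ (X t) (fun x => ℓ t x y j))
    (hconc : ∀ t j, ∀ x ∈ X t, ConcaveOn ℝ (Y t) (fun y => ℓ t x y j))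
    (η : ℝ) (hη : η ∈ Set.Ioo (0 : ℝ) 1) (hηC : η ≤ 1 / (2 * C)) :
    -- (a) the minimax step: a good response exists at every round, for every history
    (∀ t : Fin T, ∀ (x : Fin T → Euc N) (y : Fin T → Euc M),
      (∀ s, x s ∈ X s) → (∀ s, y s ∈ Y s) →
      ∃ xt ∈ X t, ∀ yt ∈ Y t,
        ∑ j : Fin d, Real.exp (η * amfRegret X Y ℓ x y (Finset.Iio t) j) *
          (ℓ t xt yt j - amfValue (X t) (Y t) (ℓ t)) ≤ 0) ∧
    -- (b) any Learner playing such points at every round bounds the final surrogate loss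
    (∀ (x : Fin T → Euc N) (y : Fin T → Euc M),
      (∀ s, x s ∈ X s) → (∀ s, y s ∈ Y s) →
      (∀ t : Fin T, ∀ yt ∈ Y t,
        ∑ j : Fin d, Real.exp (η * amfRegret X Y ℓ x y (Finset.Iio t) j) *
          (ℓ t (x t) yt j - amfValue (X t) (Y t) (ℓ t)) ≤ 0) →
      ∑ j : Fin d, Real.exp (η * amfRegret X Y ℓ x y Finset.univ j) ≤
        d * (4 * η ^ 2 * C ^ 2 + 1) ^ T) := by
  refine ⟨fun t x y _ _ => exists_forall_sum_mul_sub_amfValue_nonpos (hXconv t) (hXcomp t)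
    (hXne t) (hYconv t) (hYcomp t) (hYne t) (hcont t) (hbdd t) (hconv t) (hconc t) _
    fun _ => (exp_pos _).le, ?_⟩
  intro x y hx hy hstep
  have hηC' : η * (2 * C) ≤ 1 := by
    rcases le_or_gt C 0 with hC | hC
    · nlinarith [hη.1]
    · rwa [le_div_iff₀ (by positivity)] at hηC
  have h := le_pow_mul_of_forall_Iic_le (fun S => ∑ j, exp (η * amfRegret X Y ℓ x y S j))
    (by positivity) fun t => sum_exp_amfRegret_Iic_le hη.1.le hηC' (hXne t) (hYne t) (hbdd t)
      (hx t) (hy t) (hstep t (y t) (hy t))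
  simpa [mul_comm] using h

/-- For any `η ≤ 1/(2C)`: at every round `t`, given any history of play
through round `t−1`, there exists `x^t ∈ X^t` such that for all `y ∈ Y^t`,
`Σ_j exp(η·R^{t−1}_j)·(ℓ^t_j(x^t, y) − w^t_A) ≤ 0`.  Consequently, a Learner playing such
a point at every round guarantees `L^T ≤ d·(4η²C² + 1)^T` against any Adversary. -/
theorem amf_minimax_step_and_surrogate_bound
    (T d N M : ℕ) (hd : 1 ≤ d) (C : ℝ) (hC : 0 < C)
    (X : Fin T → Set (Euc N)) (Y : Fin T → Set (Euc M))
    (ℓ : Fin T → Euc N → Euc M → Fin d → ℝ)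
    (hXconv : ∀ t, Convex ℝ (X t)) (hXcomp : ∀ t, IsCompact (X t))
    (hXne : ∀ t, (X t).Nonempty)
    (hYconv : ∀ t, Convex ℝ (Y t)) (hYcomp : ∀ t, IsCompact (Y t))
    (hYne : ∀ t, (Y t).Nonempty)
    (hcont : ∀ t j, ContinuousOn (fun p : Euc N × Euc M => ℓ t p.1 p.2 j) (X t ×ˢ Y t))
    (hbdd : ∀ t j, ∀ x ∈ X t, ∀ y ∈ Y t, |ℓ t x y j| ≤ C)
    (hconv : ∀ t j, ∀ y ∈ Y t, ConvexOn ℝ (X t) (fun x => ℓ t x y j))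
    (hconc : ∀ t j, ∀ x ∈ X t, ConcaveOn ℝ (Y t) (fun y => ℓ t x y j))
    (η : ℝ) (hη : η ∈ Set.Ioo (0 : ℝ) 1) (hηC : η ≤ 1 / (2 * C)) :
    -- (a) the minimax step: a good response exists at every round, for every history
    (∀ t : Fin T, ∀ (x : Fin T → Euc N) (y : Fin T → Euc M),
      (∀ s, x s ∈ X s) → (∀ s, y s ∈ Y s) →
      ∃ xt ∈ X t, ∀ yt ∈ Y t,
        ∑ j : Fin d, Real.exp (η * amfRegret X Y ℓ x y (Finset.Iio t) j) *
          (ℓ t xt yt j - amfValue (X t) (Y t) (ℓ t)) ≤ 0) ∧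
    -- (b) any Learner playing such points at every round bounds the final surrogate loss
    (∀ (x : Fin T → Euc N) (y : Fin T → Euc M),
      (∀ s, x s ∈ X s) → (∀ s, y s ∈ Y s) →
      (∀ t : Fin T, ∀ yt ∈ Y t,
        ∑ j : Fin d, Real.exp (η * amfRegret X Y ℓ x y (Finset.Iio t) j) *
          (ℓ t (x t) yt j - amfValue (X t) (Y t) (ℓ t)) ≤ 0) →
      ∑ j : Fin d, Real.exp (η * amfRegret X Y ℓ x y Finset.univ j) ≤
        d * (4 * η ^ 2 * C ^ 2 + 1) ^ T) :=
  amf_minimax_step_and_surrogate_bound_general T d N M C X Y ℓ hXconv hXcomp hXne hYconv hYcomp hYne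
    hcont hbdd hconv hconc η hη hηC

end
end

section
/- In the AMF framework, suppose T ≥ ln d and η = √(ln d / (4TC²)), and suppose at each round t the Learner plays x^t ∈ argmin_{x∈X^t} max_{y∈Y^t} Σ_{j∈[d]} χ^t_j · ℓ^t_j(x, y), where χ^t_j := exp(η·Σ_{s=1}^{t−1} ℓ^s_j(x^s, y^s)) / Σ_{i∈[d]} exp(η·Σ_{s=1}^{t−1} ℓ^s_i(x^s, y^s)). Then against any choices y^t ∈ Y^t of the Adversary (which may depend on x^t and the history), the AMF regret satisfies R^T ≤ 4C·√(T·ln d). -/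
open scoped BigOperators

noncomputable section

/-- The exponential weight on coordinate `j` at round `t`:
`χ^t_j = exp(η Σ_{s<t} ℓ^s_j(x^s,y^s)) / Σ_i exp(η Σ_{s<t} ℓ^s_i(x^s,y^s))`. -/
noncomputable def chiWeight {T d N M : ℕ} (η : ℝ)
    (ℓ : Fin T → Euc N → Euc M → Fin d → ℝ)
    (x : Fin T → Euc N) (y : Fin T → Euc M) (t : Fin T) (j : Fin d) : ℝ :=
  Real.exp (η * ∑ s ∈ Finset.Iio t, ℓ s (x s) (y s) j) /
    ∑ i : Fin d, Real.exp (η * ∑ s ∈ Finset.Iio t, ℓ s (x s) (y s) i)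

/-- The objective of the Learner's stage game at round `t`:
`ψ^t(x') = max_{y ∈ Y^t} Σ_j χ^t_j · ℓ^t_j(x', y)`. -/
noncomputable def stageObjective {T d N M : ℕ} (η : ℝ)
    (Y : Fin T → Set (Euc M)) (ℓ : Fin T → Euc N → Euc M → Fin d → ℝ)
    (x : Fin T → Euc N) (y : Fin T → Euc M) (t : Fin T) (x' : Euc N) : ℝ :=
  sSup ((fun yy => ∑ j : Fin d, chiWeight η ℓ x y t j * ℓ t x' yy j) '' Y t)

/-! By Sion's minimax theorem the mixed loss `∑ⱼ χⱼ ℓⱼ` of a round has a saddle point `(a, b)`,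
and `∑ⱼ χⱼ ℓⱼ(x, b) ≤ maxⱼ ℓⱼ(x, b)` for every `x`; so a Learner minimising `ψᵗ` suffers mixed
loss at most the AMF value `wᵗ_A`. Hence the exponential-weights potential
`Φₜ = ∑ⱼ exp (η ∑_{s<t} ℓˢⱼ)` grows in round `t` by a factor at most `exp (η wᵗ_A + η²C²)`
(as `eᶻ ≤ 1 + z + z²` for `|z| ≤ 1`). Comparing `log Φ_T` with a single coordinate gives
`η Rᵀ ≤ ln d + T η² C²`, which the choice of `η` turns into `Rᵀ ≤ 4C √(T ln d)`. -/

open Finset Real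

section SaddlePoint

variable {E F ι : Type*} [TopologicalSpace E] [AddCommGroup E] [Module ℝ E]
  [IsTopologicalAddGroup E] [ContinuousSMul ℝ E] [TopologicalSpace F] [AddCommGroup F]
  [Module ℝ F] [IsTopologicalAddGroup F] [ContinuousSMul ℝ F] [Fintype ι]
  {X : Set E} {Y : Set F} {ℓ : E → F → ι → ℝ}

theorem exists_isSaddlePointOn_weightedSum {p : ι → ℝ} (hp : ∀ j, 0 ≤ p j)
    (hXne : X.Nonempty) (hXc : Convex ℝ X) (hXk : IsCompact X)
    (hYne : Y.Nonempty) (hYc : Convex ℝ Y) (hYk : IsCompact Y)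
    (hcx : ∀ j, ∀ y ∈ Y, ContinuousOn (fun x => ℓ x y j) X)
    (hcy : ∀ j, ∀ x ∈ X, ContinuousOn (fun y => ℓ x y j) Y)
    (hconv : ∀ j, ∀ y ∈ Y, ConvexOn ℝ X fun x => ℓ x y j)
    (hconc : ∀ j, ∀ x ∈ X, ConcaveOn ℝ Y fun y => ℓ x y j) :
    ∃ a ∈ X, ∃ b ∈ Y, IsSaddlePointOn X Y (fun x y => ∑ j, p j * ℓ x y j) a b := by
  have hcx' : ∀ y ∈ Y, ContinuousOn (fun x => ∑ j, p j * ℓ x y j) X := fun y hy =>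
    continuousOn_finsetSum _ fun j _ => continuousOn_const.mul (hcx j y hy)
  have hcy' : ∀ x ∈ X, ContinuousOn (fun y => ∑ j, p j * ℓ x y j) Y := fun x hx =>
    continuousOn_finsetSum _ fun j _ => continuousOn_const.mul (hcy j x hx)
  have hconv' : ∀ y ∈ Y, ConvexOn ℝ X fun x => ∑ j, p j * ℓ x y j := fun y hy => by
    simpa only [Finset.sum_fn, smul_eq_mul] using Finset.sum_induction _ (ConvexOn ℝ X)
      (fun _ _ => ConvexOn.add) (convexOn_const 0 hXc) fun j _ => (hconv j y hy).smul (hp j)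
  have hconc' : ∀ x ∈ X, ConcaveOn ℝ Y fun y => ∑ j, p j * ℓ x y j := fun x hx => by
    simpa only [Finset.sum_fn, smul_eq_mul] using Finset.sum_induction _ (ConcaveOn ℝ Y)
      (fun _ _ => ConcaveOn.add) (concaveOn_const 0 hYc) fun j _ => (hconc j x hx).smul (hp j)
  exact Sion.exists_isSaddlePointOn hXne hXc hXk
    (fun y hy => (hcx' y hy).lowerSemicontinuousOn) (fun y hy => (hconv' y hy).quasiconvexOn)
    hYc hYne hYk (fun x hx => (hcy' x hx).upperSemicontinuousOn)
    (fun x hx => (hconc' x hx).quasiconcaveOn)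

end SaddlePoint

theorem sum_mul_le_iSup_of_mem_stdSimplex {ι : Type*} [Fintype ι] {p : ι → ℝ}
    (hp : p ∈ stdSimplex ℝ ι) (v : ι → ℝ) : ∑ j, p j * v j ≤ ⨆ j, v j :=
  calc ∑ j, p j * v j ≤ ∑ j, p j * ⨆ i, v i :=
        sum_le_sum fun j _ => mul_le_mul_of_nonneg_left
          (le_ciSup (Set.finite_range v).bddAbove j) (hp.1 j)
    _ = ⨆ i, v i := by rw [← sum_mul, hp.2, one_mul]

theorem abs_ciSup_le {ι : Type*} [Finite ι] [Nonempty ι] {v : ι → ℝ} {C : ℝ}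
    (h : ∀ j, |v j| ≤ C) : |⨆ j, v j| ≤ C := by
  obtain ⟨j₀⟩ := ‹Nonempty ι›
  refine abs_le.2 ⟨(abs_le.1 (h j₀)).1.trans (le_ciSup (Set.finite_range v).bddAbove j₀), ?_⟩
  exact ciSup_le fun j => (abs_le.1 (h j)).2

section AMFValue

variable {N M d : ℕ} [Nonempty (Fin d)] {X : Set (Euc N)} {Y : Set (Euc M)}
  {ℓ : Euc N → Euc M → Fin d → ℝ} {C : ℝ}

theorem le_amfValue (hXne : X.Nonempty)
    (hbdd : ∀ j, ∀ x ∈ X, ∀ y ∈ Y, |ℓ x y j| ≤ C) {b : Euc M} (hb : b ∈ Y) {r : ℝ}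
    (hr : ∀ x ∈ X, r ≤ ⨆ j, ℓ x b j) : r ≤ amfValue X Y ℓ := by
  have hmax : ∀ x ∈ X, ∀ y ∈ Y, |⨆ j, ℓ x y j| ≤ C := fun x hx y hy =>
    abs_ciSup_le fun j => hbdd j x hx y hy
  obtain ⟨x₀, hx₀⟩ := hXne
  have hbddAbove : BddAbove ((fun y => sInf ((fun x => ⨆ j, ℓ x y j) '' X)) '' Y) := by
    refine ⟨C, Set.forall_mem_image.2 fun y hy => ?_⟩
    have hbddBelow : BddBelow ((fun x => ⨆ j, ℓ x y j) '' X) :=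
      ⟨-C, Set.forall_mem_image.2 fun x hx => (abs_le.1 (hmax x hx y hy)).1⟩
    exact csInf_le_of_le hbddBelow (Set.mem_image_of_mem _ hx₀) (abs_le.1 (hmax x₀ hx₀ y hy)).2
  calc r ≤ sInf ((fun x => ⨆ j, ℓ x b j) '' X) :=
        le_csInf ⟨_, Set.mem_image_of_mem _ hx₀⟩ (Set.forall_mem_image.2 hr)
    _ ≤ amfValue X Y ℓ := le_csSup hbddAbove (Set.mem_image_of_mem _ hb)

theorem exists_sSup_weightedSum_le_amfValue {p : Fin d → ℝ} (hp : p ∈ stdSimplex ℝ (Fin d))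
    (hXne : X.Nonempty) (hXc : Convex ℝ X) (hXk : IsCompact X)
    (hYne : Y.Nonempty) (hYc : Convex ℝ Y) (hYk : IsCompact Y)
    (hcont : ∀ j, ContinuousOn (fun q : Euc N × Euc M => ℓ q.1 q.2 j) (X ×ˢ Y))
    (hbdd : ∀ j, ∀ x ∈ X, ∀ y ∈ Y, |ℓ x y j| ≤ C)
    (hconv : ∀ j, ∀ y ∈ Y, ConvexOn ℝ X fun x => ℓ x y j)
    (hconc : ∀ j, ∀ x ∈ X, ConcaveOn ℝ Y fun y => ℓ x y j) :
    ∃ a ∈ X, sSup ((fun y => ∑ j, p j * ℓ a y j) '' Y) ≤ amfValue X Y ℓ := by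
  have hcx : ∀ j, ∀ y ∈ Y, ContinuousOn (fun x => ℓ x y j) X := fun j y hy =>
    (hcont j).comp (Continuous.prodMk_left y).continuousOn fun _ hx => Set.mk_mem_prod hx hy
  have hcy : ∀ j, ∀ x ∈ X, ContinuousOn (fun y => ℓ x y j) Y := fun j x hx =>
    (hcont j).comp (Continuous.prodMk_right x).continuousOn fun _ hy => Set.mk_mem_prod hx hy
  obtain ⟨a, ha, b, hb, hsaddle⟩ := exists_isSaddlePointOn_weightedSum hp.1 hXne hXc hXk
    hYne hYc hYk hcx hcy hconv hconc
  refine ⟨a, ha, csSup_le (hYne.image _) (Set.forall_mem_image.2 fun y hy => ?_)⟩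
  exact le_amfValue hXne hbdd hb fun x hx =>
    (hsaddle x hx y hy).trans (sum_mul_le_iSup_of_mem_stdSimplex hp _)

theorem weightedSum_le_amfValue {p : Fin d → ℝ} (hp : p ∈ stdSimplex ℝ (Fin d))
    (hXne : X.Nonempty) (hXc : Convex ℝ X) (hXk : IsCompact X)
    (hYne : Y.Nonempty) (hYc : Convex ℝ Y) (hYk : IsCompact Y)
    (hcont : ∀ j, ContinuousOn (fun q : Euc N × Euc M => ℓ q.1 q.2 j) (X ×ˢ Y))
    (hbdd : ∀ j, ∀ x ∈ X, ∀ y ∈ Y, |ℓ x y j| ≤ C)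
    (hconv : ∀ j, ∀ y ∈ Y, ConvexOn ℝ X fun x => ℓ x y j)
    (hconc : ∀ j, ∀ x ∈ X, ConcaveOn ℝ Y fun y => ℓ x y j)
    {x₀ : Euc N} {y₀ : Euc M} (hx₀ : x₀ ∈ X) (hy₀ : y₀ ∈ Y)
    (hopt : ∀ x ∈ X, sSup ((fun y => ∑ j, p j * ℓ x₀ y j) '' Y) ≤
      sSup ((fun y => ∑ j, p j * ℓ x y j) '' Y)) :
    ∑ j, p j * ℓ x₀ y₀ j ≤ amfValue X Y ℓ := by
  obtain ⟨a, ha, hA⟩ := exists_sSup_weightedSum_le_amfValue hp hXne hXc hXk hYne hYc hYk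
    hcont hbdd hconv hconc
  have hbddAbove : BddAbove ((fun y => ∑ j, p j * ℓ x₀ y j) '' Y) :=
    ⟨C, Set.forall_mem_image.2 fun y hy => (sum_mul_le_iSup_of_mem_stdSimplex hp _).trans
      (abs_le.1 (abs_ciSup_le fun j => hbdd j x₀ hx₀ y hy)).2⟩
  calc ∑ j, p j * ℓ x₀ y₀ j ≤ sSup ((fun y => ∑ j, p j * ℓ x₀ y j) '' Y) :=
        le_csSup hbddAbove (Set.mem_image_of_mem _ hy₀)
    _ ≤ sSup ((fun y => ∑ j, p j * ℓ a y j) '' Y) := hopt a ha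
    _ ≤ amfValue X Y ℓ := hA

end AMFValue

section Hedge

variable {α ι : Type*} [Fintype ι]

def potential (η : ℝ) (g : α → ι → ℝ) (S : Finset α) : ℝ :=
  ∑ j, exp (η * ∑ s ∈ S, g s j)

theorem potential_pos [Nonempty ι] {η : ℝ} {g : α → ι → ℝ} (S : Finset α) :
    0 < potential η g S :=
  sum_pos (fun _ _ => exp_pos _) univ_nonempty

variable [LinearOrder α] [LocallyFiniteOrderBot α]

/-- `chiWeight η ℓ x y` is `expWeight η (fun s j => ℓ s (x s) (y s) j)` by definition. -/
def expWeight (η : ℝ) (g : α → ι → ℝ) (t : α) (j : ι) : ℝ :=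
  exp (η * ∑ s ∈ Iio t, g s j) / potential η g (Iio t)

variable [Nonempty ι] {η C : ℝ} {g : α → ι → ℝ}

theorem expWeight_mem_stdSimplex (t : α) : expWeight η g t ∈ stdSimplex ℝ ι := by
  refine ⟨fun _ => (div_pos (exp_pos _) (potential_pos _)).le, ?_⟩
  simp only [expWeight]
  rw [← sum_div]
  exact div_self (potential_pos _).ne'

theorem potential_insert_Iio_le (hη : 0 ≤ η) (hηC : η * C ≤ 1) {a : α}
    (hg : ∀ j, |g a j| ≤ C) :
    potential η g (insert a (Iio a)) ≤
      potential η g (Iio a) * exp (η * ∑ j, expWeight η g a j * g a j + η ^ 2 * C ^ 2) := by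
  have hexp : ∀ j, exp (η * g a j) ≤ 1 + η * g a j + η ^ 2 * C ^ 2 := fun j => by
    have hsmall : |η * g a j| ≤ η * C := by
      rw [abs_mul, abs_of_nonneg hη]; exact mul_le_mul_of_nonneg_left (hg j) hη
    have hsq : (η * g a j) ^ 2 ≤ η ^ 2 * C ^ 2 := by
      rw [← sq_abs, ← mul_pow]; exact pow_le_pow_left₀ (abs_nonneg _) hsmall 2
    have := (abs_le.1 (abs_exp_sub_one_sub_id_le (hsmall.trans hηC))).2
    linarith
  have hweight : ∀ j, potential η g (Iio a) * expWeight η g a j =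
      exp (η * ∑ s ∈ Iio a, g s j) := fun j => mul_div_cancel₀ _ (potential_pos _).ne'
  set r := η * ∑ j, expWeight η g a j * g a j + η ^ 2 * C ^ 2
  have hmean : ∑ j, expWeight η g a j * (1 + η * g a j + η ^ 2 * C ^ 2) = 1 + r := by
    simp only [r, mul_add, sum_add_distrib, ← sum_mul, mul_one, (expWeight_mem_stdSimplex a).2,
      mul_left_comm _ η, ← mul_sum]
    ring
  calc potential η g (insert a (Iio a))
      = ∑ j, exp (η * ∑ s ∈ Iio a, g s j) * exp (η * g a j) := by
        simp only [potential, sum_insert notMem_Iio_self, mul_add, exp_add, mul_comm]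
    _ ≤ ∑ j, exp (η * ∑ s ∈ Iio a, g s j) * (1 + η * g a j + η ^ 2 * C ^ 2) :=
        sum_le_sum fun j _ => mul_le_mul_of_nonneg_left (hexp j) (exp_pos _).le
    _ = ∑ j, potential η g (Iio a) * expWeight η g a j * (1 + η * g a j + η ^ 2 * C ^ 2) := by
        simp only [hweight]
    _ = potential η g (Iio a) * (1 + r) := by
        rw [← hmean, mul_sum]
        simp only [mul_assoc]
    _ ≤ potential η g (Iio a) * exp r :=
        mul_le_mul_of_nonneg_left (by linarith [add_one_le_exp r]) (potential_pos _).le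

theorem Finset.eq_Iio_of_isLowerSet_insert {s : Finset α} {a : α} (hlt : ∀ x ∈ s, x < a)
    (hs : IsLowerSet (↑(insert a s) : Set α)) : s = Iio a := by
  ext x
  refine ⟨fun hx => mem_Iio.2 (hlt x hx), fun hx => ?_⟩
  rcases mem_insert.1 (hs (mem_Iio.1 hx).le (mem_insert_self a s)) with rfl | hxs
  · exact absurd (mem_Iio.1 hx) (lt_irrefl x)
  · exact hxs

theorem potential_le_of_isLowerSet (hη : 0 ≤ η) (hηC : η * C ≤ 1) {w : α → ℝ}
    {S : Finset α} (hS : IsLowerSet (S : Set α)) (hg : ∀ t ∈ S, ∀ j, |g t j| ≤ C)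
    (hw : ∀ t ∈ S, ∑ j, expWeight η g t j * g t j ≤ w t) :
    potential η g S ≤ Fintype.card ι * exp (η * ∑ t ∈ S, w t + #S * (η ^ 2 * C ^ 2)) := by
  -- Adding the maximum `a` of a lower set gives `S = Iio a`, the history behind round `a`.
  induction S using Finset.induction_on_max with
  | empty => simp [potential]
  | insert a s hlt ih =>
    obtain rfl := Finset.eq_Iio_of_isLowerSet_insert hlt hS
    have hs : IsLowerSet (↑(Iio a) : Set α) := by rw [coe_Iio]; exact isLowerSet_Iio a
    have ha := mem_insert_self a (Iio a)
    have hsub : ∀ t ∈ Iio a, t ∈ insert a (Iio a) := fun t ht => mem_insert_of_mem ht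
    calc potential η g (insert a (Iio a))
        ≤ potential η g (Iio a) * exp (η * ∑ j, expWeight η g a j * g a j + η ^ 2 * C ^ 2) :=
          potential_insert_Iio_le hη hηC (hg a ha)
      _ ≤ Fintype.card ι * exp (η * ∑ t ∈ Iio a, w t + #(Iio a) * (η ^ 2 * C ^ 2)) *
            exp (η * w a + η ^ 2 * C ^ 2) := by
          gcongr
          · exact ih hs (fun t ht => hg t (hsub t ht)) (fun t ht => hw t (hsub t ht))
          · exact hw a ha
      _ = Fintype.card ι * exp (η * ∑ t ∈ insert a (Iio a), w t +
            #(insert a (Iio a)) * (η ^ 2 * C ^ 2)) := by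
          rw [sum_insert notMem_Iio_self, card_insert_of_notMem notMem_Iio_self, mul_assoc,
            ← exp_add]
          push_cast
          ring_nf

theorem mul_regret_le_of_expWeight [Fintype α] (hη : 0 ≤ η) (hηC : η * C ≤ 1)
    (hg : ∀ t j, |g t j| ≤ C) {w : α → ℝ} (hw : ∀ t, ∑ j, expWeight η g t j * g t j ≤ w t)
    (j : ι) :
    η * (∑ t, g t j - ∑ t, w t) ≤
      log (Fintype.card ι) + Fintype.card α * (η ^ 2 * C ^ 2) := by
  have hcoord : exp (η * ∑ t, g t j) ≤ potential η g univ :=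
    single_le_sum (f := fun i => exp (η * ∑ t, g t i)) (fun _ _ => (exp_pos _).le) (mem_univ j)
  have hpot := potential_le_of_isLowerSet hη hηC (S := univ) (by simp [isLowerSet_univ])
    (fun t _ => hg t) (fun t _ => hw t)
  have hlog := log_le_log (exp_pos _) (hcoord.trans hpot)
  rw [log_exp, log_mul (by positivity) (exp_pos _).ne', log_exp, card_univ] at hlog
  linarith

end Hedge

section LearningRate

variable {a T C η : ℝ}

theorem mul_le_one_of_eq_sqrt (ha : 0 < a) (haT : a ≤ T) (hC : 0 < C)
    (hη : η = √(a / (4 * T * C ^ 2))) : η * C ≤ 1 := by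
  have hT : 0 < T := ha.trans_le haT
  have hη2 : (η * C) ^ 2 * (4 * T) = a := by
    rw [mul_pow, hη, sq_sqrt (by positivity)]
    field_simp
  have hsq : (η * C) ^ 2 ≤ 1 := by nlinarith
  exact (pow_le_one_iff_of_nonneg (by rw [hη]; positivity) two_ne_zero).1 hsq

theorem le_of_mul_le_of_eq_sqrt (ha : 0 < a) (hT : 0 < T) (hC : 0 < C)
    (hη : η = √(a / (4 * T * C ^ 2))) {R : ℝ} (hR : η * R ≤ a + T * (η ^ 2 * C ^ 2)) :
    R ≤ 4 * C * √(T * a) := by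
  have hη2 : η ^ 2 = a / (4 * T * C ^ 2) := by rw [hη, sq_sqrt (by positivity)]
  have hηpos : 0 < η := hη ▸ sqrt_pos.2 (by positivity)
  have hbound : η * (4 * C * √(T * a)) = 2 * a := by
    refine (sq_eq_sq₀ (by positivity) (by positivity)).1 ?_
    rw [mul_pow, mul_pow, mul_pow, sq_sqrt (by positivity), hη2]
    field_simp
    ring
  have hquarter : T * (η ^ 2 * C ^ 2) = a / 4 := by
    rw [hη2]; field_simp
  refine (lt_of_mul_lt_mul_left ?_ hηpos.le).le
  linarith

end LearningRate

/-- **Theorem 2.6 / AMF regret guarantee of the general algorithm.**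
If `T ≥ ln d`, `η = √(ln d/(4TC²))`, and at each round the Learner plays a minimizer of
`ψ^t` over `X^t`, then against any Adversary the AMF regret satisfies
`R^T ≤ 4C√(T ln d)`. -/
theorem amf_algorithm_regret_bound
    (T d N M : ℕ) (hd : 1 ≤ d) (C : ℝ) (hC : 0 < C)
    (X : Fin T → Set (Euc N)) (Y : Fin T → Set (Euc M))
    (ℓ : Fin T → Euc N → Euc M → Fin d → ℝ)
    (hXconv : ∀ t, Convex ℝ (X t)) (hXcomp : ∀ t, IsCompact (X t))
    (hXne : ∀ t, (X t).Nonempty)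
    (hYconv : ∀ t, Convex ℝ (Y t)) (hYcomp : ∀ t, IsCompact (Y t))
    (hYne : ∀ t, (Y t).Nonempty)
    (hcont : ∀ t j, ContinuousOn (fun p : Euc N × Euc M => ℓ t p.1 p.2 j) (X t ×ˢ Y t))
    (hbdd : ∀ t j, ∀ x ∈ X t, ∀ y ∈ Y t, |ℓ t x y j| ≤ C)
    (hconv : ∀ t j, ∀ y ∈ Y t, ConvexOn ℝ (X t) (fun x => ℓ t x y j))
    (hconc : ∀ t j, ∀ x ∈ X t, ConcaveOn ℝ (Y t) (fun y => ℓ t x y j))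
    (hT : Real.log d ≤ T)
    (η : ℝ) (hη : η = Real.sqrt (Real.log d / (4 * T * C ^ 2)))
    (x : Fin T → Euc N) (y : Fin T → Euc M)
    (hx : ∀ t, x t ∈ X t) (hy : ∀ t, y t ∈ Y t)
    -- the Learner plays minimax-optimally at every round:
    (hmin : ∀ t : Fin T, ∀ x' ∈ X t,
      stageObjective η Y ℓ x y t (x t) ≤ stageObjective η Y ℓ x y t x') :
    (⨆ j : Fin d, ((∑ t, ℓ t (x t) (y t) j) - ∑ t, amfValue (X t) (Y t) (ℓ t))) ≤
      4 * C * Real.sqrt (T * Real.log d) := by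
  have : Nonempty (Fin d) := ⟨⟨0, hd⟩⟩
  have hround : ∀ t, ∑ j, chiWeight η ℓ x y t j * ℓ t (x t) (y t) j ≤
      amfValue (X t) (Y t) (ℓ t) := fun t =>
    weightedSum_le_amfValue (expWeight_mem_stdSimplex t) (hXne t) (hXconv t) (hXcomp t)
      (hYne t) (hYconv t) (hYcomp t) (hcont t) (hbdd t) (hconv t) (hconc t) (hx t) (hy t) (hmin t)
  refine ciSup_le fun j => ?_
  -- For `d = 1` the bound is `0` and the single weight is `1` for any `η`.
  rcases hd.eq_or_lt with rfl | hd
  · have hstep : ∀ t, ℓ t (x t) (y t) j ≤ amfValue (X t) (Y t) (ℓ t) := fun t => by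
      have hweight : ∑ i, chiWeight η ℓ x y t i = 1 := (expWeight_mem_stdSimplex t).2
      rw [Fin.sum_univ_one] at hweight
      simpa [Subsingleton.elim j 0, hweight] using hround t
    calc _ ≤ (0 : ℝ) := sub_nonpos.2 (sum_le_sum fun t _ => hstep t)
      _ ≤ _ := by positivity
  · have hlog : 0 < log d := log_pos (by exact_mod_cast hd)
    have hT' : 0 < (T : ℝ) := hlog.trans_le hT
    have hηC := mul_le_one_of_eq_sqrt hlog hT hC hη
    refine le_of_mul_le_of_eq_sqrt hlog hT' hC hη ?_
    simpa using mul_regret_le_of_expWeight (hη ▸ sqrt_nonneg _) hηC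
      (fun t j => hbdd t j _ (hx t) _ (hy t)) hround j
end
end

section
/- In the probabilistic AMF framework with T ≥ ln d, the Learner who at each round plays a minimax-optimal mixture x^t ∈ argmin_{x∈ΔA^t} max_{y∈Y^t} Σ_{j∈[d]} χ^t_j · E_{a∼x}[ℓ^t_j(a, y)] with learning rate η = √(ln d / (4TC²)) and samples a^t ∼ x^t guarantees, against any adaptive Adversary, that the expected AMF regret over the randomness of the realized outcomes satisfies E[ max_{j∈[d]} ( Σ_{t=1}^T ℓ^t_j(a^t, y^t) − Σ_{t=1}^T w^t_A ) ] ≤ 4C·√(T·ln d). -/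
open scoped BigOperators

noncomputable section

/-- The prefix of a full transcript `a` before round `t`. -/
def transcriptPrefix {A : Type*} {T : ℕ} (a : Fin T → A) (t : Fin T) : Fin t.1 → A :=
  fun s => a ⟨s.1, s.2.trans t.2⟩

/-- The prefix of a history `h` before its `s`-th entry. -/
def historyPrefix {A : Type*} {m : ℕ} (h : Fin m → A) (s : Fin m) : Fin s.1 → A :=
  fun u => h ⟨u.1, u.2.trans s.2⟩

/-- The set of mixtures (probability vectors) over a finite action set `S ⊆ 𝒜`. -/
def mixtures {𝒜 : Type*} [Fintype 𝒜] (S : Finset 𝒜) : Set (𝒜 → ℝ) :=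
  {p | (∀ a, 0 ≤ p a) ∧ (∀ a ∉ S, p a = 0) ∧ ∑ a, p a = 1}

/-- The probabilistic Adversary-Moves-First value:
`w_A = sup_{y ∈ Y} inf_{x ∈ ΔA} max_j E_{a∼x}[ℓ_j(a,y)]`. -/
noncomputable def amfValueProb {𝒜 : Type*} [Fintype 𝒜] {M d : ℕ}
    (S : Finset 𝒜) (Y : Set (Euc M)) (L : 𝒜 → Euc M → Fin d → ℝ) : ℝ :=
  sSup ((fun y => sInf ((fun p => ⨆ j, ∑ a, p a * L a y j) '' mixtures S)) '' Y)

namespace AMFAux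

lemma exp_le_one_add_add_sq {z : ℝ} (hz : |z| ≤ 1) : Real.exp z ≤ 1 + z + z ^ 2 := by
  have h := Real.exp_bound hz (n := 2) (by norm_num)
  have h2 : ∑ m ∈ Finset.range 2, z ^ m / m.factorial = 1 + z := by
    simp [Finset.sum_range_succ]
  rw [h2] at h
  have h3 := (abs_sub_le_iff.mp h).1
  have h4 : |z| ^ 2 = z ^ 2 := sq_abs z
  norm_num at h3
  nlinarith [sq_nonneg z, sq_abs z]

lemma sum_swap_mul {𝒜 : Type*} [Fintype 𝒜] {d : ℕ} (p : 𝒜 → ℝ) (χ : Fin d → ℝ)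
    (F : 𝒜 → Fin d → ℝ) :
    ∑ a, p a * ∑ j, χ j * F a j = ∑ j, χ j * ∑ a, p a * F a j := by
  simp only [Finset.mul_sum]
  rw [Finset.sum_comm]
  exact Finset.sum_congr rfl fun j _ => Finset.sum_congr rfl fun a _ => by ring

lemma sum_chi_mul_const_mul {d : ℕ} (χ : Fin d → ℝ) (c : ℝ) (u : Fin d → ℝ) :
    ∑ j, χ j * (c * u j) = c * ∑ j, χ j * u j := by
  rw [Finset.mul_sum]; exact Finset.sum_congr rfl fun j _ => by ring

lemma mixtures_nonempty {𝒜 : Type*} [Fintype 𝒜] (S : Finset 𝒜) (hS : S.Nonempty) :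
    (mixtures S).Nonempty := by
  classical
  obtain ⟨a₀, ha₀⟩ := hS
  refine ⟨fun a => if a = a₀ then 1 else 0, fun a => ?_, fun a ha => ?_, ?_⟩
  · dsimp only; split <;> norm_num
  · simp only [ite_eq_right_iff, one_ne_zero]
    rintro rfl; exact absurd ha₀ ha
  · simp

lemma mix_dot_le {𝒜 : Type*} [Fintype 𝒜] {S : Finset 𝒜} {p : 𝒜 → ℝ} (hp : p ∈ mixtures S)
    {u : 𝒜 → ℝ} {B : ℝ} (hu : ∀ a ∈ S, u a ≤ B) : ∑ a, p a * u a ≤ B := by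
  obtain ⟨hp0, hpS, hp1⟩ := hp
  calc ∑ a, p a * u a ≤ ∑ a, p a * B := by
        refine Finset.sum_le_sum fun a _ => ?_
        by_cases ha : a ∈ S
        · exact mul_le_mul_of_nonneg_left (hu a ha) (hp0 a)
        · simp [hpS a ha]
    _ = B := by rw [← Finset.sum_mul, hp1, one_mul]

lemma mix_dot_ge {𝒜 : Type*} [Fintype 𝒜] {S : Finset 𝒜} {p : 𝒜 → ℝ} (hp : p ∈ mixtures S)
    {u : 𝒜 → ℝ} {B : ℝ} (hu : ∀ a ∈ S, B ≤ u a) : B ≤ ∑ a, p a * u a := by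
  have h := mix_dot_le hp (u := fun a => -u a) (B := -B) (fun a ha => neg_le_neg (hu a ha))
  have h2 : ∑ a, p a * (-u a) = -∑ a, p a * u a := by
    rw [← Finset.sum_neg_distrib]
    exact Finset.sum_congr rfl fun a _ => by ring
  rw [h2] at h
  linarith

/-- The separation-based minimax step. -/
lemma minimax_aux {𝒜 : Type*} [Fintype 𝒜] {M d : ℕ} (hd : 1 ≤ d) {C : ℝ} (hC : 0 < C)
    (S : Finset 𝒜) (hS : S.Nonempty) (Y : Set (Euc M)) (hconv : Convex ℝ Y)
    (hne : Y.Nonempty)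
    (L : 𝒜 → Euc M → Fin d → ℝ)
    (hconc : ∀ a j, ConcaveOn ℝ Y fun y => L a y j)
    (hbdd : ∀ a ∈ S, ∀ y ∈ Y, ∀ j, |L a y j| ≤ C)
    (χ : Fin d → ℝ) (hχ0 : ∀ j, 0 ≤ χ j) (hχ1 : ∑ j, χ j = 1) :
    ∃ p ∈ mixtures S, ∀ y ∈ Y, ∑ j, χ j * ∑ a, p a * L a y j ≤ amfValueProb S Y L := by
  classical
  haveI : Nonempty (Fin d) := ⟨⟨0, hd⟩⟩
  set V := amfValueProb S Y L with hV
  set g : 𝒜 → Euc M → ℝ := fun a y => ∑ j, χ j * L a y j with hg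
  have hmixne := mixtures_nonempty S hS
  have himgne : ∀ y : Euc M,
      ((fun p => ⨆ j, ∑ a, p a * L a y j) '' mixtures S).Nonempty := fun y => hmixne.image _
  have hLub : ∀ {p : 𝒜 → ℝ}, p ∈ mixtures S → ∀ y ∈ Y, ∀ j, ∑ a, p a * L a y j ≤ C :=
    fun hp y hy j => mix_dot_le hp (fun a ha => (abs_le.mp (hbdd a ha y hy j)).2)
  have hLlb : ∀ {p : 𝒜 → ℝ}, p ∈ mixtures S → ∀ y ∈ Y, ∀ j, -C ≤ ∑ a, p a * L a y j :=
    fun hp y hy j => mix_dot_ge hp (fun a ha => (abs_le.mp (hbdd a ha y hy j)).1)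
  have hbddbelow : ∀ y ∈ Y,
      BddBelow ((fun p => ⨆ j, ∑ a, p a * L a y j) '' mixtures S) := by
    intro y hy
    refine ⟨-C, ?_⟩
    rintro _ ⟨p, hp, rfl⟩
    calc (-C : ℝ) ≤ ∑ a, p a * L a y ⟨0, hd⟩ := hLlb hp y hy _
      _ ≤ ⨆ j, ∑ a, p a * L a y j :=
        le_ciSup (f := fun j => ∑ a, p a * L a y j)
          (Set.Finite.bddAbove (Set.finite_range _)) _
  have hIleC : ∀ y ∈ Y,
      sInf ((fun p => ⨆ j, ∑ a, p a * L a y j) '' mixtures S) ≤ C := by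
    intro y hy
    obtain ⟨p0, hp0⟩ := hmixne
    exact (csInf_le (hbddbelow y hy) (Set.mem_image_of_mem _ hp0)).trans
      (ciSup_le fun j => hLub hp0 y hy j)
  have hIV : ∀ y ∈ Y,
      sInf ((fun p => ⨆ j, ∑ a, p a * L a y j) '' mixtures S) ≤ V := by
    intro y hy
    refine le_csSup ⟨C, ?_⟩ (Set.mem_image_of_mem _ hy)
    rintro _ ⟨y', hy', rfl⟩
    exact hIleC y' hy'
  have key1 : ∀ y ∈ Y, ∃ a ∈ S, g a y ≤ V := by
    intro y hy
    by_contra hcon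
    push_neg at hcon
    have hVm : V < S.inf' hS (fun a => g a y) := (Finset.lt_inf'_iff hS).2 fun a ha => hcon a ha
    have hmI : S.inf' hS (fun a => g a y) ≤
        sInf ((fun p => ⨆ j, ∑ a, p a * L a y j) '' mixtures S) := by
      refine le_csInf (himgne y) ?_
      rintro _ ⟨p, hp, rfl⟩
      have h1 : S.inf' hS (fun a => g a y) ≤ ∑ a, p a * g a y :=
        mix_dot_ge hp fun a ha => Finset.inf'_le _ ha
      have h2 : ∑ a, p a * g a y = ∑ j, χ j * ∑ a, p a * L a y j :=
        sum_swap_mul p χ (fun a j => L a y j)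
      have h3 : ∑ j, χ j * ∑ a, p a * L a y j ≤ ⨆ j, ∑ a, p a * L a y j := by
        calc ∑ j, χ j * ∑ a, p a * L a y j
            ≤ ∑ j, χ j * (⨆ j', ∑ a, p a * L a y j') :=
              Finset.sum_le_sum fun j _ => mul_le_mul_of_nonneg_left
                (le_ciSup (f := fun j' => ∑ a, p a * L a y j')
                  (Set.Finite.bddAbove (Set.finite_range _)) j) (hχ0 j)
          _ = ⨆ j', ∑ a, p a * L a y j' := by rw [← Finset.sum_mul, hχ1, one_mul]
      linarith [h2 ▸ h1]
    exact absurd (hmI.trans (hIV y hy)) (not_le.mpr hVm)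
  -- Separation argument
  set K : Set (𝒜 → ℝ) := {v | ∃ y ∈ Y, ∀ a ∈ S, v a ≤ g a y} with hK
  set O : Set (𝒜 → ℝ) := {v | ∀ a ∈ S, V < v a} with hO
  have hgconc : ∀ a (y1 : Euc M), y1 ∈ Y → ∀ (y2 : Euc M), y2 ∈ Y → ∀ (θ τ : ℝ),
      0 ≤ θ → 0 ≤ τ → θ + τ = 1 → θ * g a y1 + τ * g a y2 ≤ g a (θ • y1 + τ • y2) := by
    intro a y1 hy1 y2 hy2 θ τ hθ hτ hθτ
    have h := fun j => (hconc a j).2 hy1 hy2 hθ hτ hθτ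
    calc θ * g a y1 + τ * g a y2 = ∑ j, χ j * (θ * L a y1 j + τ * L a y2 j) := by
          simp only [hg, Finset.mul_sum]
          rw [← Finset.sum_add_distrib]
          exact Finset.sum_congr rfl fun j _ => by ring
      _ ≤ ∑ j, χ j * L a (θ • y1 + τ • y2) j :=
          Finset.sum_le_sum fun j _ => mul_le_mul_of_nonneg_left
            (by simpa [smul_eq_mul] using h j) (hχ0 j)
  have hKconv : Convex ℝ K := by
    rintro v1 ⟨y1, hy1, hv1⟩ v2 ⟨y2, hy2, hv2⟩ θ τ hθ hτ hθτ
    refine ⟨θ • y1 + τ • y2, hconv hy1 hy2 hθ hτ hθτ, fun a ha => ?_⟩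
    have hcmb := hgconc a y1 hy1 y2 hy2 θ τ hθ hτ hθτ
    have h1 : θ * v1 a ≤ θ * g a y1 := mul_le_mul_of_nonneg_left (hv1 a ha) hθ
    have h2 : τ * v2 a ≤ τ * g a y2 := mul_le_mul_of_nonneg_left (hv2 a ha) hτ
    show θ * v1 a + τ * v2 a ≤ g a (θ • y1 + τ • y2)
    linarith
  have hOconv : Convex ℝ O := by
    rintro v1 hv1 v2 hv2 θ τ hθ hτ hθτ a ha
    show V < θ * v1 a + τ * v2 a
    rcases eq_or_lt_of_le hθ with h0 | h0
    · have hτ1 : τ = 1 := by linarith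
      rw [← h0, hτ1]
      simpa using hv2 a ha
    · have h1 : θ * V < θ * v1 a := mul_lt_mul_of_pos_left (hv1 a ha) h0
      have h2 : τ * V ≤ τ * v2 a := mul_le_mul_of_nonneg_left (le_of_lt (hv2 a ha)) hτ
      have h3 : θ * V + τ * V = V := by rw [← add_mul, hθτ, one_mul]
      linarith
  have hOopen : IsOpen O := by
    have hOeq : O = ⋂ a ∈ S, {v : 𝒜 → ℝ | V < v a} := by
      ext v; simp [hO, Set.mem_iInter]
    rw [hOeq]
    exact isOpen_biInter_finset fun a _ => isOpen_lt continuous_const (continuous_apply a)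
  have hdisj : Disjoint O K := by
    rw [Set.disjoint_left]
    rintro v hvO ⟨y, hy, hvK⟩
    obtain ⟨a, ha, hga⟩ := key1 y hy
    exact absurd ((hvO a ha).trans_le (hvK a ha)) (not_lt.mpr hga)
  obtain ⟨f, u, hfO, hfK⟩ := geometric_hahn_banach_open hOconv hOopen hKconv hdisj
  set e : 𝒜 → (𝒜 → ℝ) := fun a => Pi.single a (1:ℝ) with he
  have hfv : ∀ v : 𝒜 → ℝ, f v = ∑ a, v a * f (e a) := by
    intro v
    have hsingle : ∀ a, (Pi.single a (v a) : 𝒜 → ℝ) = v a • e a := by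
      intro a
      funext i
      by_cases h : i = a
      · subst h; simp [he]
      · simp [he, Pi.single_eq_of_ne h]
    have hv : v = ∑ a, v a • e a := by
      calc v = ∑ a, Pi.single a (v a) := (Finset.univ_sum_single v).symm
        _ = ∑ a, v a • e a := Finset.sum_congr rfl fun a _ => hsingle a
    conv_lhs => rw [hv]
    rw [map_sum]
    exact Finset.sum_congr rfl fun a _ => by rw [map_smul, smul_eq_mul]
  obtain ⟨y₀, hy₀⟩ := hne
  have hGK : ∀ y ∈ Y, (fun a => g a y) ∈ K := fun y hy => ⟨y, hy, fun a _ => le_refl _⟩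
  have hfv₀ : u ≤ f (fun a => g a y₀) := hfK _ (hGK y₀ hy₀)
  have hqle : ∀ a, f (e a) ≤ 0 := by
    intro a
    by_contra hpos
    push_neg at hpos
    have hlam0 : 0 ≤ (f (fun b => g b y₀) - u + 1) / f (e a) :=
      div_nonneg (by linarith) hpos.le
    have hmem : (fun b => g b y₀) - ((f (fun b => g b y₀) - u + 1) / f (e a)) •
        e a ∈ K := by
      refine ⟨y₀, hy₀, fun b hb => ?_⟩
      have hp1 : (0:ℝ) ≤ e a b := by
        by_cases h : b = a
        · subst h; simp [he]
        · simp [he, Pi.single_eq_of_ne h]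
      have : (0:ℝ) ≤ ((f (fun b => g b y₀) - u + 1) / f (e a)) *
          e a b := mul_nonneg hlam0 hp1
      show g b y₀ - ((f (fun b => g b y₀) - u + 1) / f (e a)) *
          e a b ≤ g b y₀
      linarith
    have hle := hfK _ hmem
    rw [map_sub, map_smul, smul_eq_mul] at hle
    have hcalc : (f (fun b => g b y₀) - u + 1) / f (e a) * f (e a)
        = f (fun b => g b y₀) - u + 1 := div_mul_cancel₀ _ (ne_of_gt hpos)
    rw [hcalc] at hle
    linarith
  have hqzero : ∀ a ∉ S, f (e a) = 0 := by
    intro a ha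
    rcases (hqle a).lt_or_eq with hneg | h0
    · exfalso
      have hlam0 : 0 ≤ (f (fun b => g b y₀) - u + 1) / (-f (e a)) :=
        div_nonneg (by linarith) (by linarith)
      have hmem : (fun b => g b y₀) + ((f (fun b => g b y₀) - u + 1) / (-f (e a))) •
          e a ∈ K := by
        refine ⟨y₀, hy₀, fun b hb => ?_⟩
        have hba : b ≠ a := fun h => ha (h ▸ hb)
        show g b y₀ + ((f (fun b => g b y₀) - u + 1) / (-f (e a))) *
            e a b ≤ g b y₀
        have : e a b = 0 := by simp [he, Pi.single_eq_of_ne hba]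
        rw [this]
        simp
      have hle := hfK _ hmem
      rw [map_add, map_smul, smul_eq_mul] at hle
      have hcalc : (f (fun b => g b y₀) - u + 1) / (-f (e a)) * f (e a)
          = -(f (fun b => g b y₀) - u + 1) := by
        have h1 : (f (fun b => g b y₀) - u + 1) / (-f (e a)) * (-f (e a))
            = f (fun b => g b y₀) - u + 1 := div_mul_cancel₀ _ (by linarith)
        linarith [h1]
      rw [hcalc] at hle
      linarith
    · exact h0
  set Z := ∑ a, -f (e a) with hZ
  have hZ0 : 0 ≤ Z := Finset.sum_nonneg fun a _ => neg_nonneg.2 (hqle a)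
  have hZpos : 0 < Z := by
    rcases hZ0.lt_or_eq with h | h
    · exact h
    · exfalso
      have hall : ∀ a, f (e a) = 0 := by
        intro a
        have := (Finset.sum_eq_zero_iff_of_nonneg
          (fun a _ => neg_nonneg.2 (hqle a))).1 h.symm a (Finset.mem_univ a)
        linarith
      have hf0 : ∀ v : 𝒜 → ℝ, f v = 0 := fun v => by
        rw [hfv v]; simp [hall]
      have h1 : (0:ℝ) < u := by
        have := hfO (fun _ => V + 1) (fun a _ => by norm_num)
        rwa [hf0] at this
      have h2 : u ≤ 0 := by
        have := hfv₀
        rwa [hf0] at this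
      linarith
  have hfconst : ∀ c : ℝ, f (fun _ => c) = -(c * Z) := by
    intro c
    rw [hfv, hZ, Finset.mul_sum, ← Finset.sum_neg_distrib]
    exact Finset.sum_congr rfl fun a _ => by ring
  have hVZ : -(V * Z) ≤ u := by
    by_contra hlt
    push_neg at hlt
    have hδ : 0 < (-(V * Z) - u) / (2 * Z) := div_pos (by linarith) (by linarith)
    have h1 := hfO (fun _ => V + (-(V * Z) - u) / (2 * Z)) (fun a _ => by linarith)
    rw [hfconst] at h1
    have hδZ : ((-(V * Z) - u) / (2 * Z)) * Z = (-(V * Z) - u) / 2 := by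
      field_simp
    have hexp : (V + (-(V * Z) - u) / (2 * Z)) * Z = V * Z + ((-(V * Z) - u) / (2 * Z)) * Z := by
      ring
    rw [hexp, hδZ] at h1
    linarith
  refine ⟨fun a => (-f (e a)) / Z,
    ⟨fun a => div_nonneg (neg_nonneg.2 (hqle a)) hZ0,
     fun a ha => by show -f (e a) / Z = 0; rw [hqzero a ha]; simp,
     by rw [← Finset.sum_div, ← hZ, div_self (ne_of_gt hZpos)]⟩, ?_⟩
  intro y hy
  have hu : u ≤ ∑ a, g a y * f (e a) := by
    rw [← hfv]; exact hfK _ (hGK y hy)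
  rw [← sum_swap_mul (fun a => (-f (e a)) / Z) χ (fun a j => L a y j)]
  have hfin : ∑ a, ((-f (e a)) / Z) * g a y
      = (∑ a, -(g a y * f (e a))) / Z := by
    rw [Finset.sum_div]
    exact Finset.sum_congr rfl fun a _ => by ring
  show ∑ a, ((-f (e a)) / Z) * g a y ≤ V
  rw [hfin, div_le_iff₀ hZpos]
  have hneg : ∑ a, -(g a y * f (e a)) = -∑ a, g a y * f (e a) := by
    rw [← Finset.sum_neg_distrib]
  linarith

/-- Round optimality: the minimax-optimal mixture's weighted loss at any `y₀` is below the
AMF value. -/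
lemma round_core {𝒜 : Type*} [Fintype 𝒜] {M d : ℕ} (hd : 1 ≤ d) {C : ℝ} (hC : 0 < C)
    (S : Finset 𝒜) (hS : S.Nonempty) (Y : Set (Euc M)) (hconv : Convex ℝ Y)
    (hcomp : IsCompact Y) (hne : Y.Nonempty)
    (L : 𝒜 → Euc M → Fin d → ℝ)
    (hLc : ∀ a j, ContinuousOn (fun y => L a y j) Y)
    (hconc : ∀ a j, ConcaveOn ℝ Y fun y => L a y j)
    (hbdd : ∀ a ∈ S, ∀ y ∈ Y, ∀ j, |L a y j| ≤ C)
    (χ : Fin d → ℝ) (hχ0 : ∀ j, 0 ≤ χ j) (hχ1 : ∑ j, χ j = 1)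
    (x₀ : 𝒜 → ℝ) (hx₀ : x₀ ∈ mixtures S)
    (hmin_inst : ∀ p ∈ mixtures S,
      sSup ((fun y => ∑ j, χ j * ∑ a, x₀ a * L a y j) '' Y) ≤
      sSup ((fun y => ∑ j, χ j * ∑ a, p a * L a y j) '' Y))
    (y₀ : Euc M) (hy₀ : y₀ ∈ Y) :
    ∑ j, χ j * ∑ a, x₀ a * L a y₀ j ≤ amfValueProb S Y L := by
  obtain ⟨p, hp, hpV⟩ := minimax_aux hd hC S hS Y hconv hne L hconc hbdd χ hχ0 hχ1
  have hFcont : ContinuousOn (fun y => ∑ j, χ j * ∑ a, x₀ a * L a y j) Y :=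
    continuousOn_finset_sum _ fun j _ => (continuousOn_const.mul
      (continuousOn_finset_sum _ fun a _ => continuousOn_const.mul (hLc a j)))
  have h1 : ∑ j, χ j * ∑ a, x₀ a * L a y₀ j ≤
      sSup ((fun y => ∑ j, χ j * ∑ a, x₀ a * L a y j) '' Y) :=
    le_csSup ((hcomp.image_of_continuousOn hFcont).bddAbove) (Set.mem_image_of_mem _ hy₀)
  have h2 := hmin_inst p hp
  have h3 : sSup ((fun y => ∑ j, χ j * ∑ a, p a * L a y j) '' Y) ≤ amfValueProb S Y L :=
    csSup_le (hne.image _) (by rintro _ ⟨y, hy, rfl⟩; exact hpV y hy)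
  linarith

/-- The per-round exponential-potential step bound. -/
lemma stepB {𝒜 : Type*} [Fintype 𝒜] {M d : ℕ} (hd : 1 ≤ d) {C η : ℝ} (hC : 0 < C)
    (hη : 0 < η) (hηC : η * C ≤ 1)
    (S : Finset 𝒜) (hS : S.Nonempty) (Y : Set (Euc M)) (hconv : Convex ℝ Y)
    (hcomp : IsCompact Y) (hne : Y.Nonempty)
    (L : 𝒜 → Euc M → Fin d → ℝ)
    (hLc : ∀ a j, ContinuousOn (fun y => L a y j) Y)
    (hconc : ∀ a j, ConcaveOn ℝ Y fun y => L a y j)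
    (hbdd : ∀ a ∈ S, ∀ y ∈ Y, ∀ j, |L a y j| ≤ C)
    (R : Fin d → ℝ)
    (x₀ : 𝒜 → ℝ) (hx₀ : x₀ ∈ mixtures S)
    (hmin_inst : ∀ p ∈ mixtures S,
      sSup ((fun y => ∑ j, (Real.exp (η * R j) / ∑ i, Real.exp (η * R i)) *
        ∑ a, x₀ a * L a y j) '' Y) ≤
      sSup ((fun y => ∑ j, (Real.exp (η * R j) / ∑ i, Real.exp (η * R i)) *
        ∑ a, p a * L a y j) '' Y))
    (y₀ : Euc M) (hy₀ : y₀ ∈ Y) :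
    ∑ b, x₀ b * ((1/η) * Real.log (∑ j, Real.exp (η * (R j + L b y₀ j)))) ≤
      (1/η) * Real.log (∑ j, Real.exp (η * R j)) + amfValueProb S Y L + η * C^2 := by
  haveI : Nonempty (Fin d) := ⟨⟨0, hd⟩⟩
  have hApos : 0 < ∑ i, Real.exp (η * R i) :=
    Finset.sum_pos (fun i _ => Real.exp_pos _) Finset.univ_nonempty
  set A := ∑ i, Real.exp (η * R i) with hA
  set χ : Fin d → ℝ := fun j => Real.exp (η * R j) / A with hχ
  have hχ0 : ∀ j, 0 ≤ χ j := fun j => div_nonneg (Real.exp_pos _).le hApos.le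
  have hχpos : ∀ j, 0 < χ j := fun j => div_pos (Real.exp_pos _) hApos
  have hχ1 : ∑ j, χ j = 1 := by
    simp only [hχ]
    rw [← Finset.sum_div, ← hA, div_self (ne_of_gt hApos)]
  have hVle := round_core hd hC S hS Y hconv hcomp hne L hLc hconc hbdd χ hχ0 hχ1 x₀ hx₀
    hmin_inst y₀ hy₀
  have hkey : ∀ b ∈ S, (1/η) * Real.log (∑ j, Real.exp (η * (R j + L b y₀ j))) ≤
      (1/η) * Real.log A + (∑ j, χ j * L b y₀ j) + η * C^2 := by
    intro b hb
    have hsum : ∑ j, Real.exp (η * (R j + L b y₀ j)) =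
        A * ∑ j, χ j * Real.exp (η * L b y₀ j) := by
      rw [Finset.mul_sum]
      refine Finset.sum_congr rfl fun j _ => ?_
      rw [mul_add, Real.exp_add]
      simp only [hχ]
      field_simp
    have hBpos : 0 < ∑ j, χ j * Real.exp (η * L b y₀ j) :=
      Finset.sum_pos (fun j _ => mul_pos (hχpos j) (Real.exp_pos _)) Finset.univ_nonempty
    have hlog : Real.log (∑ j, Real.exp (η * (R j + L b y₀ j))) =
        Real.log A + Real.log (∑ j, χ j * Real.exp (η * L b y₀ j)) := by
      rw [hsum, Real.log_mul (ne_of_gt hApos) (ne_of_gt hBpos)]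
    have hexp_le : ∀ j, Real.exp (η * L b y₀ j) ≤ 1 + η * L b y₀ j + η^2 * C^2 := by
      intro j
      have hLb := abs_le.mp (hbdd b hb y₀ hy₀ j)
      have habs : |η * L b y₀ j| ≤ 1 := by
        rw [abs_mul, abs_of_pos hη]
        calc η * |L b y₀ j| ≤ η * C :=
              mul_le_mul_of_nonneg_left (hbdd b hb y₀ hy₀ j) hη.le
          _ ≤ 1 := hηC
      have h1 := exp_le_one_add_add_sq habs
      have hL2 : (L b y₀ j)^2 ≤ C^2 := sq_le_sq' (by linarith [hLb.1]) hLb.2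
      have h2 : (η * L b y₀ j)^2 ≤ η^2 * C^2 := by
        rw [mul_pow]; exact mul_le_mul_of_nonneg_left hL2 (sq_nonneg η)
      linarith
    have hsum_le : ∑ j, χ j * Real.exp (η * L b y₀ j) ≤
        1 + η * (∑ j, χ j * L b y₀ j) + η^2 * C^2 := by
      calc ∑ j, χ j * Real.exp (η * L b y₀ j)
          ≤ ∑ j, χ j * (1 + η * L b y₀ j + η^2 * C^2) :=
            Finset.sum_le_sum fun j _ => mul_le_mul_of_nonneg_left (hexp_le j) (hχ0 j)
        _ = ∑ j, (χ j * (1 + η^2*C^2) + η * (χ j * L b y₀ j)) :=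
            Finset.sum_congr rfl fun j _ => by ring
        _ = (1 + η^2*C^2) * ∑ j, χ j + η * ∑ j, χ j * L b y₀ j := by
            rw [Finset.sum_add_distrib, ← Finset.mul_sum, ← Finset.sum_mul]
            ring
        _ = 1 + η * (∑ j, χ j * L b y₀ j) + η^2 * C^2 := by rw [hχ1]; ring
    have hlog2 : Real.log (∑ j, χ j * Real.exp (η * L b y₀ j)) ≤
        η * (∑ j, χ j * L b y₀ j) + η^2 * C^2 := by
      have := Real.log_le_sub_one_of_pos hBpos
      linarith
    have hmul : (1/η) * Real.log (∑ j, χ j * Real.exp (η * L b y₀ j)) ≤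
        (∑ j, χ j * L b y₀ j) + η * C^2 := by
      have h3 : (1/η) * Real.log (∑ j, χ j * Real.exp (η * L b y₀ j)) ≤
          (1/η) * (η * (∑ j, χ j * L b y₀ j) + η^2 * C^2) :=
        mul_le_mul_of_nonneg_left hlog2 (by positivity)
      have h4 : (1/η) * (η * (∑ j, χ j * L b y₀ j) + η^2 * C^2) =
          (∑ j, χ j * L b y₀ j) + η * C^2 := by
        field_simp
      linarith
    rw [hlog, mul_add]
    linarith
  have hstep2 : ∑ b, x₀ b * ((1/η) * Real.log (∑ j, Real.exp (η * (R j + L b y₀ j)))) ≤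
      ∑ b, x₀ b * ((1/η) * Real.log A + (∑ j, χ j * L b y₀ j) + η * C^2) := by
    refine Finset.sum_le_sum fun b _ => ?_
    by_cases hb : b ∈ S
    · exact mul_le_mul_of_nonneg_left (hkey b hb) ((hx₀.1) b)
    · rw [hx₀.2.1 b hb]; simp
  have hsum3 : ∑ b, x₀ b * ((1/η) * Real.log A + (∑ j, χ j * L b y₀ j) + η * C^2) =
      (1/η) * Real.log A + (∑ j, χ j * ∑ b, x₀ b * L b y₀ j) + η * C^2 := by
    have h1 : ∑ b, x₀ b * ((1/η) * Real.log A + (∑ j, χ j * L b y₀ j) + η * C^2)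
        = ((1/η) * Real.log A + η*C^2) * (∑ b, x₀ b) +
          ∑ b, x₀ b * (∑ j, χ j * L b y₀ j) := by
      rw [Finset.mul_sum, ← Finset.sum_add_distrib]
      exact Finset.sum_congr rfl fun b _ => by ring
    rw [h1, hx₀.2.2, mul_one, sum_swap_mul x₀ χ (fun b j => L b y₀ j)]
    ring
  rw [hsum3] at hstep2
  linarith

/-- Splitting a history-sum over `Fin (t+1)` at a `snoc`. -/
lemma snoc_sum_split {𝒜 : Type*} {T : ℕ}
    (F : ∀ s : Fin T, (Fin s.1 → 𝒜) → 𝒜 → ℝ) (t : ℕ) (ht : t < T)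
    (h : Fin t → 𝒜) (b : 𝒜) :
    ∑ s : Fin (t+1), F ⟨s.1, lt_of_le_of_lt (Nat.lt_succ_iff.mp s.2) ht⟩
        (historyPrefix (Fin.snoc h b : Fin (t+1) → 𝒜) s) ((Fin.snoc h b : Fin (t+1) → 𝒜) s)
      = (∑ s : Fin t, F ⟨s.1, s.2.trans ht⟩ (historyPrefix h s) (h s)) + F ⟨t, ht⟩ h b := by
  rw [Fin.sum_univ_castSucc]
  congr 1
  · refine Finset.sum_congr rfl fun s _ => ?_
    have h1 : historyPrefix (Fin.snoc h b : Fin (t+1) → 𝒜) (Fin.castSucc s) =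
        historyPrefix h s := by
      funext u
      show (Fin.snoc h b : Fin (t+1) → 𝒜) ⟨u.1, u.2.trans (Fin.castSucc s).2⟩ =
        h ⟨u.1, u.2.trans s.2⟩
      have heq : (⟨u.1, u.2.trans (Fin.castSucc s).2⟩ : Fin (t+1)) =
          Fin.castSucc ⟨u.1, u.2.trans s.2⟩ := Fin.ext rfl
      rw [heq, Fin.snoc_castSucc]
    have h2 : (Fin.snoc h b : Fin (t+1) → 𝒜) (Fin.castSucc s) = h s := by simp
    show F ⟨s.1, s.2.trans ht⟩ (historyPrefix (Fin.snoc h b) (Fin.castSucc s))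
        ((Fin.snoc h b : Fin (t+1) → 𝒜) (Fin.castSucc s)) =
      F ⟨s.1, s.2.trans ht⟩ (historyPrefix h s) (h s)
    exact congrArg₂ (F ⟨s.1, s.2.trans ht⟩) h1 h2
  · have h1 : historyPrefix (Fin.snoc h b : Fin (t+1) → 𝒜) (Fin.last t) = h := by
      funext u
      show (Fin.snoc h b : Fin (t+1) → 𝒜) ⟨u.1, u.2.trans (Fin.last t).2⟩ = h u
      have heq : (⟨u.1, u.2.trans (Fin.last t).2⟩ : Fin (t+1)) = Fin.castSucc u := Fin.ext rfl
      rw [heq, Fin.snoc_castSucc]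
    have h2 : (Fin.snoc h b : Fin (t+1) → 𝒜) (Fin.last t) = b := by simp
    show F ⟨t, ht⟩ (historyPrefix (Fin.snoc h b) (Fin.last t))
        ((Fin.snoc h b : Fin (t+1) → 𝒜) (Fin.last t)) = F ⟨t, ht⟩ h b
    exact congrArg₂ (F ⟨t, ht⟩) h1 h2

/-- Tower rule / supermartingale argument over transcripts. -/
lemma tower {𝒜 : Type*} [Fintype 𝒜] (T : ℕ) :
    ∀ (k : ∀ t : ℕ, (Fin t → 𝒜) → 𝒜 → ℝ) (Φ : ∀ t : ℕ, (Fin t → 𝒜) → ℝ),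
    (∀ t, t < T → ∀ (h : Fin t → 𝒜) b, 0 ≤ k t h b) →
    (∀ t, t < T → ∀ h : Fin t → 𝒜, ∑ b, k t h b * Φ (t+1) (Fin.snoc h b) ≤ Φ t h) →
    ∀ h₀ : Fin 0 → 𝒜,
    ∑ a : Fin T → 𝒜,
      (∏ t : Fin T, k t.1 (fun s : Fin t.1 => a ⟨s.1, s.2.trans t.2⟩) (a t)) * Φ T a ≤
      Φ 0 h₀ := by
  induction T with
  | zero =>
    intro k Φ hk0 hstep h₀
    rw [Fintype.sum_unique]
    simp only [Finset.univ_eq_empty, Finset.prod_empty, one_mul]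
    exact le_of_eq (congrArg (Φ 0) (Subsingleton.elim _ _))
  | succ T ih =>
    intro k Φ hk0 hstep h₀
    have hsummand : ∀ (h : Fin T → 𝒜) (b : 𝒜),
        (∏ t : Fin (T+1), k t.1
          (fun s : Fin t.1 => (Fin.snoc h b : Fin (T+1) → 𝒜) ⟨s.1, s.2.trans t.2⟩)
          ((Fin.snoc h b : Fin (T+1) → 𝒜) t))
        = (∏ t : Fin T, k t.1 (fun s : Fin t.1 => h ⟨s.1, s.2.trans t.2⟩) (h t)) * k T h b := by
      intro h b
      rw [Fin.prod_univ_castSucc]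
      congr 1
      · refine Finset.prod_congr rfl fun t _ => ?_
        have h1 : (fun s : Fin t.1 => (Fin.snoc h b : Fin (T+1) → 𝒜)
            ⟨s.1, s.2.trans (Fin.castSucc t).2⟩) = fun s : Fin t.1 => h ⟨s.1, s.2.trans t.2⟩ := by
          funext s
          have heq : (⟨s.1, s.2.trans (Fin.castSucc t).2⟩ : Fin (T+1)) =
              Fin.castSucc ⟨s.1, s.2.trans t.2⟩ := Fin.ext rfl
          rw [heq, Fin.snoc_castSucc]
        have h2 : (Fin.snoc h b : Fin (T+1) → 𝒜) (Fin.castSucc t) = h t := by simp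
        show k t.1 (fun s : Fin t.1 => (Fin.snoc h b : Fin (T+1) → 𝒜)
            ⟨s.1, s.2.trans (Fin.castSucc t).2⟩) ((Fin.snoc h b : Fin (T+1) → 𝒜) (Fin.castSucc t))
          = k t.1 (fun s : Fin t.1 => h ⟨s.1, s.2.trans t.2⟩) (h t)
        exact congrArg₂ (k t.1) h1 h2
      · have h1 : (fun s : Fin (Fin.last T).1 => (Fin.snoc h b : Fin (T+1) → 𝒜)
            ⟨s.1, s.2.trans (Fin.last T).2⟩) = h := by
          funext s
          have heq : (⟨s.1, s.2.trans (Fin.last T).2⟩ : Fin (T+1)) = Fin.castSucc s := Fin.ext rfl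
          rw [heq, Fin.snoc_castSucc]
        have h2 : (Fin.snoc h b : Fin (T+1) → 𝒜) (Fin.last T) = b := by simp
        show k T (fun s : Fin (Fin.last T).1 => (Fin.snoc h b : Fin (T+1) → 𝒜)
            ⟨s.1, s.2.trans (Fin.last T).2⟩) ((Fin.snoc h b : Fin (T+1) → 𝒜) (Fin.last T))
          = k T h b
        exact congrArg₂ (k T) h1 h2
    have hre : ∑ a : Fin (T+1) → 𝒜,
        (∏ t : Fin (T+1), k t.1 (fun s : Fin t.1 => a ⟨s.1, s.2.trans t.2⟩) (a t)) * Φ (T+1) a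
        = ∑ h : Fin T → 𝒜, ∑ b : 𝒜,
          ((∏ t : Fin T, k t.1 (fun s : Fin t.1 => h ⟨s.1, s.2.trans t.2⟩) (h t)) *
            (k T h b * Φ (T+1) (Fin.snoc h b))) := by
      rw [← Equiv.sum_comp (Fin.snocEquiv (fun _ : Fin (T+1) => 𝒜))
        (fun a => (∏ t : Fin (T+1), k t.1
          (fun s : Fin t.1 => a ⟨s.1, s.2.trans t.2⟩) (a t)) * Φ (T+1) a)]
      rw [Fintype.sum_prod_type, Finset.sum_comm]
      refine Finset.sum_congr rfl fun h _ => Finset.sum_congr rfl fun b _ => ?_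
      have happ : (Fin.snocEquiv (fun _ : Fin (T+1) => 𝒜)) (b, h) =
          (Fin.snoc h b : Fin (T+1) → 𝒜) := funext fun i => rfl
      rw [happ, hsummand h b]
      ring
    rw [hre]
    have hinner : ∀ h : Fin T → 𝒜, ∑ b : 𝒜,
        ((∏ t : Fin T, k t.1 (fun s : Fin t.1 => h ⟨s.1, s.2.trans t.2⟩) (h t)) *
          (k T h b * Φ (T+1) (Fin.snoc h b)))
        ≤ (∏ t : Fin T, k t.1 (fun s : Fin t.1 => h ⟨s.1, s.2.trans t.2⟩) (h t)) * Φ T h := by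
      intro h
      rw [← Finset.mul_sum]
      exact mul_le_mul_of_nonneg_left (hstep T (Nat.lt_succ_self T) h)
        (Finset.prod_nonneg fun t _ => hk0 t.1 (t.2.trans (Nat.lt_succ_self T)) _ _)
    calc ∑ h : Fin T → 𝒜, ∑ b : 𝒜,
        ((∏ t : Fin T, k t.1 (fun s : Fin t.1 => h ⟨s.1, s.2.trans t.2⟩) (h t)) *
          (k T h b * Φ (T+1) (Fin.snoc h b)))
        ≤ ∑ h : Fin T → 𝒜,
          (∏ t : Fin T, k t.1 (fun s : Fin t.1 => h ⟨s.1, s.2.trans t.2⟩) (h t)) * Φ T h :=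
          Finset.sum_le_sum fun h _ => hinner h
      _ ≤ Φ 0 h₀ := ih k Φ (fun t ht => hk0 t (ht.trans (Nat.lt_succ_self T)))
          (fun t ht => hstep t (ht.trans (Nat.lt_succ_self T))) h₀

def auxR {𝒜 : Type*} [Fintype 𝒜] {M d T : ℕ}
    (L : ∀ t : Fin T, (Fin t.1 → 𝒜) → 𝒜 → Euc M → Fin d → ℝ)
    (yc : ∀ t : Fin T, (Fin t.1 → 𝒜) → Euc M)
    (t : ℕ) (ht : t ≤ T) (h : Fin t → 𝒜) (j : Fin d) : ℝ :=
  ∑ s : Fin t, L ⟨s.1, lt_of_lt_of_le s.2 ht⟩ (historyPrefix h s) (h s)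
      (yc ⟨s.1, lt_of_lt_of_le s.2 ht⟩ (historyPrefix h s)) j

def auxW {𝒜 : Type*} [Fintype 𝒜] {M d T : ℕ}
    (Af : ∀ t : Fin T, (Fin t.1 → 𝒜) → Finset 𝒜)
    (Ys : ∀ t : Fin T, (Fin t.1 → 𝒜) → Set (Euc M))
    (L : ∀ t : Fin T, (Fin t.1 → 𝒜) → 𝒜 → Euc M → Fin d → ℝ)
    (t : ℕ) (ht : t ≤ T) (h : Fin t → 𝒜) : ℝ :=
  ∑ s : Fin t, amfValueProb (Af ⟨s.1, lt_of_lt_of_le s.2 ht⟩ (historyPrefix h s))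
      (Ys ⟨s.1, lt_of_lt_of_le s.2 ht⟩ (historyPrefix h s))
      (L ⟨s.1, lt_of_lt_of_le s.2 ht⟩ (historyPrefix h s))

def auxPhiA {𝒜 : Type*} [Fintype 𝒜] {M d T : ℕ}
    (Af : ∀ t : Fin T, (Fin t.1 → 𝒜) → Finset 𝒜)
    (Ys : ∀ t : Fin T, (Fin t.1 → 𝒜) → Set (Euc M))
    (L : ∀ t : Fin T, (Fin t.1 → 𝒜) → 𝒜 → Euc M → Fin d → ℝ)
    (yc : ∀ t : Fin T, (Fin t.1 → 𝒜) → Euc M)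
    (j₀ : Fin d) (t : ℕ) (h : Fin t → 𝒜) : ℝ :=
  if ht : t ≤ T then auxR L yc t ht h j₀ - auxW Af Ys L t ht h else 0

def auxPhiB {𝒜 : Type*} [Fintype 𝒜] {M d T : ℕ}
    (Af : ∀ t : Fin T, (Fin t.1 → 𝒜) → Finset 𝒜)
    (Ys : ∀ t : Fin T, (Fin t.1 → 𝒜) → Set (Euc M))
    (L : ∀ t : Fin T, (Fin t.1 → 𝒜) → 𝒜 → Euc M → Fin d → ℝ)
    (yc : ∀ t : Fin T, (Fin t.1 → 𝒜) → Euc M)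
    (η C : ℝ) (t : ℕ) (h : Fin t → 𝒜) : ℝ :=
  if ht : t ≤ T then
    (1/η) * Real.log (∑ j, Real.exp (η * auxR L yc t ht h j)) - auxW Af Ys L t ht h +
      ((T:ℝ) - (t:ℝ)) * (η * C^2)
  else 0

lemma sum_mix_affine {𝒜 : Type*} [Fintype 𝒜] {S : Finset 𝒜} {p : 𝒜 → ℝ}
    (hp : p ∈ mixtures S) (c : ℝ) (u : 𝒜 → ℝ) :
    ∑ b, p b * (c + u b) = c + ∑ b, p b * u b := by
  have h1 : ∑ b, p b * (c + u b) = ∑ b, (c * p b + p b * u b) :=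
    Finset.sum_congr rfl fun b _ => by ring
  rw [h1, Finset.sum_add_distrib, ← Finset.mul_sum, hp.2.2, mul_one]

end AMFAux

set_option maxHeartbeats 2000000 in
/-- **Theorem 2.7, in-expectation bound for the probabilistic Learner.**
In the probabilistic AMF framework with `T ≥ ln d` and `η = √(ln d/(4TC²))`, a Learner
playing a minimax-optimal mixture at every round and sampling from it guarantees, against
any adaptive Adversary, `E[max_j (Σ_t ℓ^t_j(a^t,y^t) − Σ_t w^t_A)] ≤ 4C√(T ln d)`. -/
theorem probabilistic_amf_expectation_bound
    (𝒜 : Type) [Fintype 𝒜] (T d M : ℕ) (hd : 1 ≤ d) (C : ℝ) (hC : 0 < C)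
    -- the adaptive Adversary's choice of environments, as a function of the realized history:
    (Af : ∀ t : Fin T, (Fin t.1 → 𝒜) → Finset 𝒜)
    (Ys : ∀ t : Fin T, (Fin t.1 → 𝒜) → Set (Euc M))
    (L : ∀ t : Fin T, (Fin t.1 → 𝒜) → 𝒜 → Euc M → Fin d → ℝ)
    -- the adaptive Adversary's response `y^t` (it may depend on `x^t`, which is itself
    -- determined by the history, so a function of the history is fully general):
    (yc : ∀ t : Fin T, (Fin t.1 → 𝒜) → Euc M)
    (hAf : ∀ t h, (Af t h).Nonempty)
    (hYconv : ∀ t h, Convex ℝ (Ys t h)) (hYcomp : ∀ t h, IsCompact (Ys t h))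
    (hYne : ∀ t h, (Ys t h).Nonempty)
    (hLcont : ∀ t h a j, ContinuousOn (fun y => L t h a y j) (Ys t h))
    (hLconc : ∀ t h a j, ConcaveOn ℝ (Ys t h) (fun y => L t h a y j))
    (hLbdd : ∀ t h, ∀ a ∈ Af t h, ∀ y ∈ Ys t h, ∀ j, |L t h a y j| ≤ C)
    (hyc : ∀ t h, yc t h ∈ Ys t h)
    (hT : Real.log d ≤ T)
    (η : ℝ) (hη : η = Real.sqrt (Real.log d / (4 * T * C ^ 2)))
    -- the Learner's mixtures:
    (x : ∀ t : Fin T, (Fin t.1 → 𝒜) → 𝒜 → ℝ)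
    (hxmix : ∀ t h, x t h ∈ mixtures (Af t h))
    -- the Learner plays minimax-optimally at every round: writing
    -- `χ^t_j ∝ exp(η Σ_{s<t} ℓ^s_j(a^s,y^s))` for the realized losses along the history,
    -- `x^t` minimizes `max_{y ∈ Y^t} Σ_j χ^t_j E_{a∼x}[ℓ^t_j(a,y)]` over all mixtures:
    (hmin : ∀ t h, ∀ p ∈ mixtures (Af t h),
      sSup ((fun y => ∑ j : Fin d,
          (Real.exp (η * ∑ s : Fin t.1,
              L ⟨s.1, s.2.trans t.2⟩ (historyPrefix h s) (h s)
                (yc ⟨s.1, s.2.trans t.2⟩ (historyPrefix h s)) j) /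
            ∑ i : Fin d, Real.exp (η * ∑ s : Fin t.1,
              L ⟨s.1, s.2.trans t.2⟩ (historyPrefix h s) (h s)
                (yc ⟨s.1, s.2.trans t.2⟩ (historyPrefix h s)) i)) *
          ∑ a, x t h a * L t h a y j) '' Ys t h)
        ≤
      sSup ((fun y => ∑ j : Fin d,
          (Real.exp (η * ∑ s : Fin t.1,
              L ⟨s.1, s.2.trans t.2⟩ (historyPrefix h s) (h s)
                (yc ⟨s.1, s.2.trans t.2⟩ (historyPrefix h s)) j) /
            ∑ i : Fin d, Real.exp (η * ∑ s : Fin t.1,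
              L ⟨s.1, s.2.trans t.2⟩ (historyPrefix h s) (h s)
                (yc ⟨s.1, s.2.trans t.2⟩ (historyPrefix h s)) i)) *
          ∑ a, p a * L t h a y j) '' Ys t h)) :
    -- expected AMF regret bound, the expectation over the Learner's realized outcomes:
    ∑ a : Fin T → 𝒜, (∏ t, x t (transcriptPrefix a t) (a t)) *
        (⨆ j : Fin d, ((∑ t, L t (transcriptPrefix a t) (a t)
              (yc t (transcriptPrefix a t)) j) -
          ∑ t, amfValueProb (Af t (transcriptPrefix a t)) (Ys t (transcriptPrefix a t))
            (L t (transcriptPrefix a t)))) ≤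
      4 * C * Real.sqrt (T * Real.log d) := by
  classical
  haveI : Nonempty (Fin d) := ⟨⟨0, hd⟩⟩
  have hRHS0 : 0 ≤ 4 * C * Real.sqrt ((T:ℝ) * Real.log d) := by positivity
  set k : ∀ t : ℕ, (Fin t → 𝒜) → 𝒜 → ℝ :=
    fun t h b => if ht : t < T then x ⟨t, ht⟩ h b else 0 with hkdef
  have hkx : ∀ (t : ℕ) (ht : t < T) (h : Fin t → 𝒜) (b : 𝒜), k t h b = x ⟨t, ht⟩ h b := by
    intro t ht h b
    simp only [hkdef]
    rw [dif_pos ht]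
  have hk0 : ∀ t, t < T → ∀ (h : Fin t → 𝒜) (b : 𝒜), 0 ≤ k t h b := by
    intro t ht h b
    rw [hkx t ht h b]
    exact (hxmix ⟨t, ht⟩ h).1 b
  have hprodeq : ∀ a : Fin T → 𝒜, (∏ t, x t (transcriptPrefix a t) (a t)) =
      ∏ t : Fin T, k t.1 (fun s : Fin t.1 => a ⟨s.1, s.2.trans t.2⟩) (a t) := by
    intro a
    refine Finset.prod_congr rfl fun t _ => ?_
    rw [hkx t.1 t.2]
    rfl
  have hprod0 : ∀ a : Fin T → 𝒜,
      0 ≤ ∏ t : Fin T, k t.1 (fun s : Fin t.1 => a ⟨s.1, s.2.trans t.2⟩) (a t) :=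
    fun a => Finset.prod_nonneg fun t _ => hk0 t.1 t.2 _ _
  rcases lt_or_ge d 2 with hd2 | hd2
  · -- ===================== case d = 1 =====================
    have hd1 : d = 1 := le_antisymm (by omega) hd
    subst hd1
    have hstep : ∀ t, t < T → ∀ h : Fin t → 𝒜,
        ∑ b, k t h b * AMFAux.auxPhiA Af Ys L yc 0 (t+1) (Fin.snoc h b) ≤
          AMFAux.auxPhiA Af Ys L yc 0 t h := by
      intro t ht h
      have ht' : t + 1 ≤ T := ht
      have htle : t ≤ T := le_of_lt ht
      have hxm := hxmix ⟨t, ht⟩ h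
      have hrc := AMFAux.round_core (le_refl 1) hC (Af ⟨t,ht⟩ h) (hAf _ _) (Ys ⟨t,ht⟩ h)
        (hYconv _ _) (hYcomp _ _) (hYne _ _) (L ⟨t,ht⟩ h) (hLcont _ _) (hLconc _ _)
        (hLbdd _ _)
        (fun j : Fin 1 => Real.exp (η * AMFAux.auxR L yc t htle h j) /
          ∑ i : Fin 1, Real.exp (η * AMFAux.auxR L yc t htle h i))
        (fun j => div_nonneg (Real.exp_pos _).le
          (Finset.sum_pos (fun i _ => Real.exp_pos _) Finset.univ_nonempty).le)
        (by rw [← Finset.sum_div, div_self (ne_of_gt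
          (Finset.sum_pos (fun i _ => Real.exp_pos _) Finset.univ_nonempty))])
        (x ⟨t,ht⟩ h) hxm (hmin ⟨t,ht⟩ h) (yc ⟨t,ht⟩ h) (hyc _ _)
      have hcol : ∀ u : Fin 1 → ℝ,
          (∑ j : Fin 1, (Real.exp (η * AMFAux.auxR L yc t htle h j) /
            ∑ i : Fin 1, Real.exp (η * AMFAux.auxR L yc t htle h i)) * u j) = u 0 := by
        intro u
        rw [Fin.sum_univ_one, Fin.sum_univ_one, div_self (Real.exp_ne_zero _), one_mul]
      rw [hcol] at hrc
      have hRs : ∀ b : 𝒜, AMFAux.auxR L yc (t+1) ht' (Fin.snoc h b) 0 =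
          AMFAux.auxR L yc t htle h 0 + L ⟨t,ht⟩ h b (yc ⟨t,ht⟩ h) 0 := fun b =>
        AMFAux.snoc_sum_split (fun s g bb => L s g bb (yc s g) 0) t ht h b
      have hWs : ∀ b : 𝒜, AMFAux.auxW Af Ys L (t+1) ht' (Fin.snoc h b) =
          AMFAux.auxW Af Ys L t htle h +
            amfValueProb (Af ⟨t,ht⟩ h) (Ys ⟨t,ht⟩ h) (L ⟨t,ht⟩ h) := fun b =>
        AMFAux.snoc_sum_split (fun s g _ => amfValueProb (Af s g) (Ys s g) (L s g)) t ht h b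
      calc ∑ b, k t h b * AMFAux.auxPhiA Af Ys L yc 0 (t+1) (Fin.snoc h b)
          = ∑ b, x ⟨t,ht⟩ h b *
              ((AMFAux.auxR L yc t htle h 0 - AMFAux.auxW Af Ys L t htle h -
                amfValueProb (Af ⟨t,ht⟩ h) (Ys ⟨t,ht⟩ h) (L ⟨t,ht⟩ h)) +
                L ⟨t,ht⟩ h b (yc ⟨t,ht⟩ h) 0) := by
            refine Finset.sum_congr rfl fun b _ => ?_
            rw [hkx t ht h b]
            congr 1
            unfold AMFAux.auxPhiA
            rw [dif_pos ht', hRs b, hWs b]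
            ring
        _ = (AMFAux.auxR L yc t htle h 0 - AMFAux.auxW Af Ys L t htle h -
              amfValueProb (Af ⟨t,ht⟩ h) (Ys ⟨t,ht⟩ h) (L ⟨t,ht⟩ h)) +
              ∑ b, x ⟨t,ht⟩ h b * L ⟨t,ht⟩ h b (yc ⟨t,ht⟩ h) 0 :=
            AMFAux.sum_mix_affine hxm _ _
        _ ≤ AMFAux.auxR L yc t htle h 0 - AMFAux.auxW Af Ys L t htle h := by linarith
        _ = AMFAux.auxPhiA Af Ys L yc 0 t h := by
            unfold AMFAux.auxPhiA
            rw [dif_pos htle]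
    have htow := AMFAux.tower T k (AMFAux.auxPhiA Af Ys L yc 0) hk0 hstep
      (fun s => s.elim0)
    have hbnd : ∀ a : Fin T → 𝒜,
        (⨆ j : Fin 1, ((∑ t, L t (transcriptPrefix a t) (a t)
              (yc t (transcriptPrefix a t)) j) -
          ∑ t, amfValueProb (Af t (transcriptPrefix a t)) (Ys t (transcriptPrefix a t))
            (L t (transcriptPrefix a t)))) ≤ AMFAux.auxPhiA Af Ys L yc 0 T a := by
      intro a
      refine ciSup_le fun j => ?_
      have hj : j = 0 := Subsingleton.elim j 0
      subst hj
      unfold AMFAux.auxPhiA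
      rw [dif_pos (le_refl T)]
      exact le_of_eq rfl
    have hzero : AMFAux.auxPhiA Af Ys L yc 0 0 (fun s => s.elim0) = 0 := by
      unfold AMFAux.auxPhiA
      rw [dif_pos (Nat.zero_le T)]
      simp [AMFAux.auxR, AMFAux.auxW]
    calc ∑ a : Fin T → 𝒜, (∏ t, x t (transcriptPrefix a t) (a t)) *
        (⨆ j : Fin 1, ((∑ t, L t (transcriptPrefix a t) (a t)
              (yc t (transcriptPrefix a t)) j) -
          ∑ t, amfValueProb (Af t (transcriptPrefix a t)) (Ys t (transcriptPrefix a t))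
            (L t (transcriptPrefix a t))))
        ≤ ∑ a : Fin T → 𝒜,
          (∏ t : Fin T, k t.1 (fun s : Fin t.1 => a ⟨s.1, s.2.trans t.2⟩) (a t)) *
            AMFAux.auxPhiA Af Ys L yc 0 T a := by
          refine Finset.sum_le_sum fun a _ => ?_
          rw [hprodeq a]
          exact mul_le_mul_of_nonneg_left (hbnd a) (hprod0 a)
      _ ≤ AMFAux.auxPhiA Af Ys L yc 0 0 (fun s => s.elim0) := htow
      _ ≤ 4 * C * Real.sqrt ((T:ℝ) * Real.log ((1:ℕ):ℝ)) := by rw [hzero]; positivity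
  · -- ===================== case d ≥ 2 =====================
    have hd2' : (1:ℝ) < (d:ℝ) := by exact_mod_cast hd2
    have hlogd : 0 < Real.log d := Real.log_pos hd2'
    have hTpos : 0 < (T:ℝ) := lt_of_lt_of_le hlogd hT
    have hηpos : 0 < η := by
      rw [hη]
      exact Real.sqrt_pos.2 (by positivity)
    have hη2 : η^2 = Real.log d / (4 * T * C^2) := by
      rw [hη]
      exact Real.sq_sqrt (by positivity)
    have hηC : η * C ≤ 1 := by
      have h1 : (η * C)^2 = Real.log d / (4 * T) := by
        rw [mul_pow, hη2]
        field_simp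
      have h2 : Real.log d / (4 * T) ≤ 1/4 := by
        rw [div_le_div_iff₀ (by positivity) (by norm_num)]
        linarith
      nlinarith [mul_nonneg hηpos.le hC.le]
    have hstep : ∀ t, t < T → ∀ h : Fin t → 𝒜,
        ∑ b, k t h b * AMFAux.auxPhiB Af Ys L yc η C (t+1) (Fin.snoc h b) ≤
          AMFAux.auxPhiB Af Ys L yc η C t h := by
      intro t ht h
      have ht' : t + 1 ≤ T := ht
      have htle : t ≤ T := le_of_lt ht
      have hxm := hxmix ⟨t, ht⟩ h
      have hsb := AMFAux.stepB hd hC hηpos hηC (Af ⟨t,ht⟩ h) (hAf _ _) (Ys ⟨t,ht⟩ h)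
        (hYconv _ _) (hYcomp _ _) (hYne _ _) (L ⟨t,ht⟩ h) (hLcont _ _) (hLconc _ _)
        (hLbdd _ _) (AMFAux.auxR L yc t htle h)
        (x ⟨t,ht⟩ h) hxm (hmin ⟨t,ht⟩ h) (yc ⟨t,ht⟩ h) (hyc _ _)
      have hRs : ∀ (b : 𝒜) (j : Fin d), AMFAux.auxR L yc (t+1) ht' (Fin.snoc h b) j =
          AMFAux.auxR L yc t htle h j + L ⟨t,ht⟩ h b (yc ⟨t,ht⟩ h) j := fun b j =>
        AMFAux.snoc_sum_split (fun s g bb => L s g bb (yc s g) j) t ht h b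
      have hWs : ∀ b : 𝒜, AMFAux.auxW Af Ys L (t+1) ht' (Fin.snoc h b) =
          AMFAux.auxW Af Ys L t htle h +
            amfValueProb (Af ⟨t,ht⟩ h) (Ys ⟨t,ht⟩ h) (L ⟨t,ht⟩ h) := fun b =>
        AMFAux.snoc_sum_split (fun s g _ => amfValueProb (Af s g) (Ys s g) (L s g)) t ht h b
      calc ∑ b, k t h b * AMFAux.auxPhiB Af Ys L yc η C (t+1) (Fin.snoc h b)
          = ∑ b, x ⟨t,ht⟩ h b *
              ((-(AMFAux.auxW Af Ys L t htle h +
                  amfValueProb (Af ⟨t,ht⟩ h) (Ys ⟨t,ht⟩ h) (L ⟨t,ht⟩ h)) +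
                ((T:ℝ) - ((t+1 : ℕ):ℝ)) * (η * C^2)) +
                (1/η) * Real.log (∑ j, Real.exp (η * (AMFAux.auxR L yc t htle h j +
                  L ⟨t,ht⟩ h b (yc ⟨t,ht⟩ h) j)))) := by
            refine Finset.sum_congr rfl fun b _ => ?_
            rw [hkx t ht h b]
            congr 1
            unfold AMFAux.auxPhiB
            rw [dif_pos ht', hWs b]
            simp only [hRs b]
            ring
        _ = (-(AMFAux.auxW Af Ys L t htle h +
                amfValueProb (Af ⟨t,ht⟩ h) (Ys ⟨t,ht⟩ h) (L ⟨t,ht⟩ h)) +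
              ((T:ℝ) - ((t+1 : ℕ):ℝ)) * (η * C^2)) +
              ∑ b, x ⟨t,ht⟩ h b * ((1/η) * Real.log (∑ j, Real.exp (η *
                (AMFAux.auxR L yc t htle h j + L ⟨t,ht⟩ h b (yc ⟨t,ht⟩ h) j)))) :=
            AMFAux.sum_mix_affine hxm _ _
        _ ≤ (-(AMFAux.auxW Af Ys L t htle h +
                amfValueProb (Af ⟨t,ht⟩ h) (Ys ⟨t,ht⟩ h) (L ⟨t,ht⟩ h)) +
              ((T:ℝ) - ((t+1 : ℕ):ℝ)) * (η * C^2)) +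
              ((1/η) * Real.log (∑ j, Real.exp (η * AMFAux.auxR L yc t htle h j)) +
                amfValueProb (Af ⟨t,ht⟩ h) (Ys ⟨t,ht⟩ h) (L ⟨t,ht⟩ h) + η * C^2) := by
            linarith
        _ = AMFAux.auxPhiB Af Ys L yc η C t h := by
            unfold AMFAux.auxPhiB
            rw [dif_pos htle]
            push_cast
            ring
    have htow := AMFAux.tower T k (AMFAux.auxPhiB Af Ys L yc η C) hk0 hstep
      (fun s => s.elim0)
    have hbnd : ∀ a : Fin T → 𝒜,
        (⨆ j : Fin d, ((∑ t, L t (transcriptPrefix a t) (a t)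
              (yc t (transcriptPrefix a t)) j) -
          ∑ t, amfValueProb (Af t (transcriptPrefix a t)) (Ys t (transcriptPrefix a t))
            (L t (transcriptPrefix a t)))) ≤ AMFAux.auxPhiB Af Ys L yc η C T a := by
      intro a
      refine ciSup_le fun j => ?_
      unfold AMFAux.auxPhiB
      rw [dif_pos (le_refl T)]
      have hpos : 0 < ∑ i, Real.exp (η * AMFAux.auxR L yc T (le_refl T) a i) :=
        Finset.sum_pos (fun i _ => Real.exp_pos _) Finset.univ_nonempty
      have h1 : Real.exp (η * AMFAux.auxR L yc T (le_refl T) a j) ≤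
          ∑ i, Real.exp (η * AMFAux.auxR L yc T (le_refl T) a i) :=
        Finset.single_le_sum (f := fun i => Real.exp (η * AMFAux.auxR L yc T (le_refl T) a i))
          (fun i _ => (Real.exp_pos _).le) (Finset.mem_univ j)
      have h2 : η * AMFAux.auxR L yc T (le_refl T) a j ≤
          Real.log (∑ i, Real.exp (η * AMFAux.auxR L yc T (le_refl T) a i)) :=
        (Real.le_log_iff_exp_le hpos).2 h1
      have h3 : AMFAux.auxR L yc T (le_refl T) a j ≤
          (1/η) * Real.log (∑ i, Real.exp (η * AMFAux.auxR L yc T (le_refl T) a i)) := by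
        have h4 : AMFAux.auxR L yc T (le_refl T) a j =
            (1/η) * (η * AMFAux.auxR L yc T (le_refl T) a j) := by
          field_simp
        rw [h4]
        exact mul_le_mul_of_nonneg_left h2 (by positivity)
      have h5 : ((T:ℝ) - ((T:ℕ):ℝ)) * (η * C^2) = 0 := by simp
      have heq1 : (∑ t, L t (transcriptPrefix a t) (a t) (yc t (transcriptPrefix a t)) j) =
          AMFAux.auxR L yc T (le_refl T) a j := rfl
      have heq2 : (∑ t, amfValueProb (Af t (transcriptPrefix a t))
          (Ys t (transcriptPrefix a t)) (L t (transcriptPrefix a t))) =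
          AMFAux.auxW Af Ys L T (le_refl T) a := rfl
      rw [heq1, heq2, h5]
      linarith
    have hzero : AMFAux.auxPhiB Af Ys L yc η C 0 (fun s => s.elim0) =
        (1/η) * Real.log d + (T:ℝ) * (η * C^2) := by
      unfold AMFAux.auxPhiB
      rw [dif_pos (Nat.zero_le T)]
      have h1 : ∀ j : Fin d, AMFAux.auxR L yc 0 (Nat.zero_le T) (fun s => s.elim0) j = 0 := by
        intro j
        simp [AMFAux.auxR]
      have h2 : AMFAux.auxW Af Ys L 0 (Nat.zero_le T) (fun s => s.elim0) = 0 := by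
        simp [AMFAux.auxW]
      simp only [h1, h2]
      rw [mul_zero, Real.exp_zero]
      simp only [Finset.sum_const, Finset.card_univ, Fintype.card_fin, nsmul_eq_mul, mul_one]
      push_cast
      ring
    have hnum : (1/η) * Real.log d + (T:ℝ) * (η * C^2) ≤
        4 * C * Real.sqrt ((T:ℝ) * Real.log d) := by
      set sq := Real.sqrt ((T:ℝ) * Real.log d) with hsq
      have hs2 : sq^2 = (T:ℝ) * Real.log d := Real.sq_sqrt (by positivity)
      have hs0 : 0 < sq := Real.sqrt_pos.2 (by positivity)
      have hkey : η * (2*C*sq) = Real.log d := by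
        have h1 : (η * (2*C*sq))^2 = (Real.log d)^2 := by
          rw [mul_pow, hη2, mul_pow, mul_pow, hs2]
          field_simp
          ring
        have h2 : 0 ≤ η * (2*C*sq) := by positivity
        calc η * (2*C*sq) = Real.sqrt ((η * (2*C*sq))^2) := (Real.sqrt_sq h2).symm
          _ = Real.sqrt ((Real.log d)^2) := by rw [h1]
          _ = Real.log d := Real.sqrt_sq hlogd.le
      have hterm1 : (1/η) * Real.log d = 2*C*sq := by
        rw [← hkey]
        field_simp
      have hηeq : η = Real.log d / (2*C*sq) := by
        rw [eq_div_iff (by positivity)]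
        exact hkey
      have hterm2 : (T:ℝ) * (η * C^2) = C * sq / 2 := by
        have hmul : (T:ℝ) * (η * C^2) * (2*C*sq) = (C * sq / 2) * (2*C*sq) := by
          calc (T:ℝ) * (η * C^2) * (2*C*sq) = ((T:ℝ)*C^2) * (η*(2*C*sq)) := by ring
            _ = (T:ℝ)*C^2*Real.log d := by rw [hkey]
            _ = C^2 * ((T:ℝ)*Real.log d) := by ring
            _ = C^2 * sq^2 := by rw [hs2]
            _ = (C * sq / 2) * (2*C*sq) := by ring
        exact mul_right_cancel₀ (by positivity) hmul
      nlinarith [mul_pos hC hs0]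
    calc ∑ a : Fin T → 𝒜, (∏ t, x t (transcriptPrefix a t) (a t)) *
        (⨆ j : Fin d, ((∑ t, L t (transcriptPrefix a t) (a t)
              (yc t (transcriptPrefix a t)) j) -
          ∑ t, amfValueProb (Af t (transcriptPrefix a t)) (Ys t (transcriptPrefix a t))
            (L t (transcriptPrefix a t))))
        ≤ ∑ a : Fin T → 𝒜,
          (∏ t : Fin T, k t.1 (fun s : Fin t.1 => a ⟨s.1, s.2.trans t.2⟩) (a t)) *
            AMFAux.auxPhiB Af Ys L yc η C T a := by
          refine Finset.sum_le_sum fun a _ => ?_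
          rw [hprodeq a]
          exact mul_le_mul_of_nonneg_left (hbnd a) (hprod0 a)
      _ ≤ AMFAux.auxPhiB Af Ys L yc η C 0 (fun s => s.elim0) := htow
      _ ≤ 4 * C * Real.sqrt ((T:ℝ) * Real.log d) := by rw [hzero]; exact hnum


end
end

section
/- In the probabilistic AMF framework with T ≥ ln d, the Learner who at each round plays a minimax-optimal mixture x^t ∈ argmin_{x∈ΔA^t} max_{y∈Y^t} Σ_{j∈[d]} χ^t_j · E_{a∼x}[ℓ^t_j(a, y)] with learning rate η = √(ln d / (4TC²)) guarantees: for any δ ∈ (0,1), with probability at least 1−δ over the randomness of the realized outcomes, max_{j∈[d]} ( Σ_{t=1}^T ℓ^t_j(a^t, y^t) − Σ_{t=1}^T w^t_A ) ≤ 8C·√(T·ln(d/δ)). -/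
open scoped BigOperators

noncomputable section

/-!
At every round the Learner's mixture minimises the `χ`-weighted worst-case loss, so by Sion's
minimax theorem its `χ`-weighted expected loss against any response is at most the AMF value
`w_A`. The realized `χ`-weighted loss therefore exceeds `w_A` by at most a deviation `ξ^t` of
conditional mean zero and size at most `2C`. By Hoeffding's lemma the exponential-weights
potential `∑_j exp (η L_j)` gains at most a factor `exp (η (w_A + ξ^t) + 2 η² C²)` per round, so
`max_j (L_j - ∑ w_A) ≤ ln d / η + 2 η C² T + ∑ ξ^t = 3 C √(T ln d) + ∑ ξ^t`. Finally the
Azuma–Hoeffding inequality on the tree of transcripts bounds the probability that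
`∑ ξ^t > 5 C √(T ln (d/δ))` by `exp (-25 ln (d/δ) / 8) ≤ δ`.
-/

open Finset Real

section ProbabilityVector

variable {ι : Type*} [Fintype ι] {p : ι → ℝ}

theorem sum_mul_le_sum_mul_of_support (hp : ∀ i, 0 ≤ p i) {f g : ι → ℝ}
    (hfg : ∀ i, p i ≠ 0 → f i ≤ g i) : ∑ i, p i * f i ≤ ∑ i, p i * g i := by
  refine sum_le_sum fun i _ => ?_
  rcases eq_or_ne (p i) 0 with h | h
  · simp [h]
  · exact mul_le_mul_of_nonneg_left (hfg i h) (hp i)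

theorem abs_sum_mul_le_of_mem_stdSimplex (hp : p ∈ stdSimplex ℝ ι) {v : ι → ℝ} {K : ℝ}
    (hv : ∀ i, p i ≠ 0 → |v i| ≤ K) : |∑ i, p i * v i| ≤ K := by
  have hsum : ∑ i, p i * K = K := by rw [← sum_mul, hp.2, one_mul]
  rw [abs_le]
  constructor
  · simpa [hsum] using sum_mul_le_sum_mul_of_support hp.1 fun i hi => neg_le_of_abs_le (hv i hi)
  · simpa [hsum] using sum_mul_le_sum_mul_of_support hp.1 fun i hi => le_of_abs_le (hv i hi)

theorem sum_mul_le_ciSup_of_mem_stdSimplex (hp : p ∈ stdSimplex ℝ ι) (v : ι → ℝ) :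
    ∑ i, p i * v i ≤ ⨆ i, v i := by
  calc ∑ i, p i * v i ≤ ∑ i, p i * ⨆ j, v j :=
        sum_mul_le_sum_mul_of_support hp.1 fun i _ => le_ciSup (Set.finite_range v).bddAbove i
    _ = ⨆ j, v j := by rw [← sum_mul, hp.2, one_mul]

theorem sum_mul_sub_sum_mul_eq_zero (hp : ∑ i, p i = 1) (g : ι → ℝ) :
    ∑ i, p i * (g i - ∑ k, p k * g k) = 0 := by
  simp only [mul_sub, sum_sub_distrib, ← sum_mul, hp, one_mul, sub_self]

theorem exp_le_cosh_add_mul_sinh_div {v K : ℝ} (hv : |v| ≤ K) :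
    exp v ≤ cosh K + v * (sinh K / K) := by
  rcases (abs_nonneg v |>.trans hv).eq_or_lt with rfl | hK
  · simp [abs_nonpos_iff.1 hv]
  -- `v` is the convex combination of `-K` and `K` with weights `(K - v) / 2K` and `(K + v) / 2K`
  have hconv := convexOn_exp.2 (Set.mem_univ (-K)) (Set.mem_univ K)
    (show 0 ≤ (K - v) / (2 * K) from div_nonneg (by linarith [le_abs_self v]) (by positivity))
    (show 0 ≤ (K + v) / (2 * K) from div_nonneg (by linarith [neg_abs_le v]) (by positivity))
    (by field_simp; ring)
  simp only [smul_eq_mul] at hconv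
  calc exp v = exp ((K - v) / (2 * K) * -K + (K + v) / (2 * K) * K) := by
        congr 1; field_simp; ring
    _ ≤ _ := hconv
    _ = cosh K + v * (sinh K / K) := by rw [cosh_eq, sinh_eq]; field_simp; ring

/-- Hoeffding's lemma for a finitely supported distribution. -/
theorem sum_mul_exp_le_exp_sq_div_two (hp : p ∈ stdSimplex ℝ ι) {v : ι → ℝ} {K : ℝ}
    (hmean : ∑ i, p i * v i = 0) (hv : ∀ i, p i ≠ 0 → |v i| ≤ K) :
    ∑ i, p i * exp (v i) ≤ exp (K ^ 2 / 2) :=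
  calc ∑ i, p i * exp (v i) ≤ ∑ i, p i * (cosh K + v i * (sinh K / K)) :=
        sum_mul_le_sum_mul_of_support hp.1 fun i hi => exp_le_cosh_add_mul_sinh_div (hv i hi)
    _ = cosh K := by
        simp only [mul_add, sum_add_distrib, ← sum_mul, ← mul_assoc, hp.2, hmean]; ring
    _ ≤ exp (K ^ 2 / 2) := cosh_le_exp_half_sq K

theorem sum_mul_exp_le_exp_sum_mul_add (hp : p ∈ stdSimplex ℝ ι) {u : ι → ℝ} {C : ℝ}
    (hu : ∀ i, p i ≠ 0 → |u i| ≤ C) :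
    ∑ i, p i * exp (u i) ≤ exp (∑ i, p i * u i + 2 * C ^ 2) := by
  set μ := ∑ i, p i * u i
  have hμ : |μ| ≤ C := abs_sum_mul_le_of_mem_stdSimplex hp hu
  have hcentered := sum_mul_exp_le_exp_sq_div_two hp (v := fun i => u i - μ) (K := 2 * C)
    (sum_mul_sub_sum_mul_eq_zero hp.2 u) fun i hi =>
      (abs_sub _ _).trans (by linarith [hu i hi])
  calc ∑ i, p i * exp (u i) = exp μ * ∑ i, p i * exp (u i - μ) := by
        rw [mul_sum]; refine sum_congr rfl fun i _ => ?_
        rw [exp_sub]; field_simp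
    _ ≤ exp μ * exp ((2 * C) ^ 2 / 2) := mul_le_mul_of_nonneg_left hcentered (exp_pos μ).le
    _ = exp (μ + 2 * C ^ 2) := by rw [← exp_add]; ring_nf

end ProbabilityVector

section Hedge

variable {ι : Type*} [Fintype ι]

def softmax (η : ℝ) (v : ι → ℝ) (j : ι) : ℝ := exp (η * v j) / ∑ i, exp (η * v i)

theorem softmax_mem_stdSimplex [Nonempty ι] (η : ℝ) (v : ι → ℝ) :
    softmax η v ∈ stdSimplex ℝ ι := by
  have hpos : 0 < ∑ i, exp (η * v i) := sum_pos (fun i _ => exp_pos _) univ_nonempty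
  refine ⟨fun j => div_nonneg (exp_pos _).le hpos.le, ?_⟩
  simp only [softmax, ← sum_div, div_self hpos.ne']

theorem softmax_of_subsingleton [Subsingleton ι] (η : ℝ) (v : ι → ℝ)
    (j : ι) : softmax η v j = 1 := by
  rw [softmax, Fintype.sum_subsingleton _ j, div_self (exp_pos _).ne']

theorem sum_exp_mul_add_le [Nonempty ι] (η : ℝ) (v u : ι → ℝ) {C : ℝ} (hu : ∀ j, |u j| ≤ C) :
    ∑ j, exp (η * (v j + u j)) ≤
      (∑ j, exp (η * v j)) * exp (η * ∑ j, softmax η v j * u j + 2 * η ^ 2 * C ^ 2) := by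
  have hpos : 0 < ∑ i, exp (η * v i) := sum_pos (fun i _ => exp_pos _) univ_nonempty
  have hsplit : ∑ j, exp (η * (v j + u j)) =
      (∑ j, exp (η * v j)) * ∑ j, softmax η v j * exp (η * u j) := by
    rw [mul_sum]
    refine sum_congr rfl fun j _ => ?_
    rw [softmax, mul_add, exp_add]
    field_simp
  have hηu : ∀ j, softmax η v j ≠ 0 → |η * u j| ≤ |η| * C := fun j _ => by
    rw [abs_mul]; exact mul_le_mul_of_nonneg_left (hu j) (abs_nonneg η)
  rw [hsplit]
  gcongr
  calc ∑ j, softmax η v j * exp (η * u j)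
      ≤ exp (∑ j, softmax η v j * (η * u j) + 2 * (|η| * C) ^ 2) :=
        sum_mul_exp_le_exp_sum_mul_add (softmax_mem_stdSimplex η v) hηu
    _ = exp (η * ∑ j, softmax η v j * u j + 2 * η ^ 2 * C ^ 2) := by
        rw [mul_sum, mul_pow, sq_abs]
        congr 1
        simp only [mul_left_comm η]
        ring

theorem sum_exp_cumulative_le [Nonempty ι] {η C : ℝ} (hη : 0 ≤ η) {ℓ : ℕ → ι → ℝ}
    {r : ℕ → ℝ} {n : ℕ} (hℓ : ∀ i < n, ∀ j, |ℓ i j| ≤ C)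
    (hr : ∀ i < n, ∑ j, softmax η (fun j => ∑ k ∈ range i, ℓ k j) j * ℓ i j ≤ r i) :
    ∑ j, exp (η * ∑ i ∈ range n, ℓ i j) ≤
      Fintype.card ι * exp (η * ∑ i ∈ range n, r i + 2 * η ^ 2 * C ^ 2 * n) := by
  induction n with
  | zero => simp
  | succ n ih =>
    have ih := ih (fun i hi => hℓ i (hi.trans (lt_add_one n)))
      (fun i hi => hr i (hi.trans (lt_add_one n)))
    calc ∑ j, exp (η * ∑ i ∈ range (n + 1), ℓ i j)
        = ∑ j, exp (η * (∑ i ∈ range n, ℓ i j + ℓ n j)) := by simp only [sum_range_succ]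
      _ ≤ (∑ j, exp (η * ∑ i ∈ range n, ℓ i j)) *
            exp (η * r n + 2 * η ^ 2 * C ^ 2) := by
          refine (sum_exp_mul_add_le η _ _ (hℓ n (lt_add_one n))).trans ?_
          gcongr
          exact hr n (lt_add_one n)
      _ ≤ Fintype.card ι * exp (η * ∑ i ∈ range n, r i + 2 * η ^ 2 * C ^ 2 * n) *
            exp (η * r n + 2 * η ^ 2 * C ^ 2) := by gcongr
      _ = Fintype.card ι *
            exp (η * ∑ i ∈ range (n + 1), r i + 2 * η ^ 2 * C ^ 2 * ↑(n + 1)) := by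
          rw [mul_assoc, ← exp_add, sum_range_succ]; push_cast; ring_nf

theorem hedge_regret_le [Nonempty ι] {η C : ℝ} (hη : 0 < η) {ℓ : ℕ → ι → ℝ} {r : ℕ → ℝ}
    {n : ℕ} (hℓ : ∀ i < n, ∀ j, |ℓ i j| ≤ C)
    (hr : ∀ i < n, ∑ j, softmax η (fun j => ∑ k ∈ range i, ℓ k j) j * ℓ i j ≤ r i) (j : ι) :
    ∑ i ∈ range n, ℓ i j ≤
      ∑ i ∈ range n, r i + log (Fintype.card ι) / η + 2 * η * C ^ 2 * n := by
  have hcard : (0 : ℝ) < Fintype.card ι := by exact_mod_cast Fintype.card_pos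
  have hpot := (single_le_sum (fun j _ => (exp_pos _).le) (mem_univ j)).trans
    (sum_exp_cumulative_le hη.le hℓ hr)
  rw [← le_log_iff_exp_le (by positivity), log_mul hcard.ne' (exp_pos _).ne', log_exp] at hpot
  refine le_of_mul_le_mul_left (hpot.trans_eq ?_) hη
  field_simp
  ring

end Hedge

section Transcript

variable {𝒜 : Type*} [Fintype 𝒜] {T : ℕ}

def transcriptProb (x : ∀ t : Fin T, (Fin t.1 → 𝒜) → 𝒜 → ℝ) (a : Fin T → 𝒜) : ℝ :=
  ∏ t, x t (transcriptPrefix a t) (a t)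

theorem sum_prod_le_pow (f : ∀ t : Fin T, (Fin t.1 → 𝒜) → 𝒜 → ℝ) {B : ℝ} (hB : 0 ≤ B)
    (hf : ∀ t h b, 0 ≤ f t h b) (hfB : ∀ t h, ∑ b, f t h b ≤ B) :
    ∑ a : Fin T → 𝒜, ∏ t, f t (transcriptPrefix a t) (a t) ≤ B ^ T := by
  induction T with
  | zero => simp
  | succ T ih =>
    set P : (Fin T → 𝒜) → ℝ := fun g => ∏ t : Fin T, f t.castSucc (transcriptPrefix g t) (g t)
    have hsplit : ∀ a : Fin (T + 1) → 𝒜, ∏ t, f t (transcriptPrefix a t) (a t) =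
        P (Fin.init a) * f (Fin.last T) (Fin.init a) (a (Fin.last T)) :=
      fun a => Fin.prod_univ_castSucc _
    calc ∑ a : Fin (T + 1) → 𝒜, ∏ t, f t (transcriptPrefix a t) (a t)
        = ∑ g, P g * ∑ b, f (Fin.last T) g b := by
          simp_rw [hsplit, mul_sum]
          rw [Fintype.sum_equiv (Fin.snocEquiv fun _ => 𝒜).symm
            (fun a => P (Fin.init a) * f (Fin.last T) (Fin.init a) (a (Fin.last T)))
            (fun q => P q.2 * f (Fin.last T) q.2 q.1) fun a => rfl, Fintype.sum_prod_type, sum_comm]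
      _ ≤ ∑ g, P g * B := sum_le_sum fun g _ =>
          mul_le_mul_of_nonneg_left (hfB (Fin.last T) g) (prod_nonneg fun t _ => hf _ _ _)
      _ ≤ B ^ T * B := by
          rw [← sum_mul]
          gcongr
          exact ih (fun t => f t.castSucc) (fun t => hf t.castSucc) (fun t => hfB t.castSucc)
      _ = B ^ (T + 1) := (pow_succ B T).symm

/-- The Azuma–Hoeffding inequality on the tree of transcripts. -/
theorem sum_ite_lt_sum_le_exp (x ξ : ∀ t : Fin T, (Fin t.1 → 𝒜) → 𝒜 → ℝ)
    (hx : ∀ t h, x t h ∈ stdSimplex ℝ 𝒜) (hmean : ∀ t h, ∑ b, x t h b * ξ t h b = 0)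
    {K : ℝ} (hξ : ∀ t h b, x t h b ≠ 0 → |ξ t h b| ≤ K) {s : ℝ} (hs : 0 ≤ s) :
    ∑ a : Fin T → 𝒜,
        (if s < ∑ t, ξ t (transcriptPrefix a t) (a t) then transcriptProb x a else 0) ≤
      exp (-(s ^ 2 / (2 * K ^ 2 * T))) := by
  set c := s / (K ^ 2 * T)
  have hc : 0 ≤ c := by positivity
  have hprob : ∀ a, 0 ≤ transcriptProb x a := fun a => prod_nonneg fun t _ => (hx _ _).1 _
  have hmgf : ∀ t h, ∑ b, x t h b * exp (c * ξ t h b) ≤ exp ((c * K) ^ 2 / 2) := fun t h =>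
    sum_mul_exp_le_exp_sq_div_two (hx t h)
      (by simp only [mul_left_comm _ c, ← mul_sum, hmean, mul_zero]) fun b hb => by
        rw [abs_mul, abs_of_nonneg hc]; exact mul_le_mul_of_nonneg_left (hξ t h b hb) hc
  have hmarkov : ∀ a : Fin T → 𝒜,
      (if s < ∑ t, ξ t (transcriptPrefix a t) (a t) then transcriptProb x a else 0) ≤
        (∏ t, x t (transcriptPrefix a t) (a t) * exp (c * ξ t (transcriptPrefix a t) (a t))) *
          exp (-(c * s)) := by
    intro a
    rw [prod_mul_distrib, ← exp_sum, mul_assoc, ← exp_add, ← mul_sum, ← sub_eq_add_neg,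
      ← mul_sub]
    split_ifs with h
    · exact le_mul_of_one_le_right (hprob a) (one_le_exp (mul_nonneg hc (by linarith)))
    · exact mul_nonneg (hprob a) (exp_pos _).le
  calc _ ≤ (∑ a : Fin T → 𝒜,
          ∏ t, x t (transcriptPrefix a t) (a t) * exp (c * ξ t (transcriptPrefix a t) (a t))) *
          exp (-(c * s)) := by rw [sum_mul]; exact sum_le_sum fun a _ => hmarkov a
    _ ≤ exp ((c * K) ^ 2 / 2) ^ T * exp (-(c * s)) := by
        gcongr
        exact sum_prod_le_pow _ (exp_pos _).le
          (fun t h b => mul_nonneg ((hx t h).1 b) (exp_pos _).le) hmgf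
    _ = exp (-(s ^ 2 / (2 * K ^ 2 * T))) := by
        rw [← exp_nat_mul, ← exp_add]
        congr 1
        rcases eq_or_ne (K ^ 2 * T) 0 with h | h
        · simp [c, h, mul_assoc]
        · simp only [c]; field_simp; ring

end Transcript

section Minimax

variable {𝒜 : Type*} [Fintype 𝒜] {S : Finset 𝒜} {p : 𝒜 → ℝ}

theorem mixtures_eq_inter (S : Finset 𝒜) :
    mixtures S = stdSimplex ℝ 𝒜 ∩ {p | ∀ a ∉ S, p a = 0} := by
  ext p
  simp only [mixtures, stdSimplex, Set.mem_inter_iff, Set.mem_ofPred_eq]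
  tauto

theorem mem_stdSimplex_of_mem_mixtures (hp : p ∈ mixtures S) : p ∈ stdSimplex ℝ 𝒜 :=
  ⟨hp.1, hp.2.2⟩

theorem mem_of_mem_mixtures_of_ne_zero (hp : p ∈ mixtures S) {a : 𝒜} (ha : p a ≠ 0) :
    a ∈ S := by
  by_contra h
  exact ha (hp.2.1 a h)

theorem convex_mixtures (S : Finset 𝒜) : Convex ℝ (mixtures S) := by
  rw [mixtures_eq_inter]
  refine (convex_stdSimplex ℝ 𝒜).inter fun p hp q hq s t _ _ _ a ha => ?_
  simp [hp a ha, hq a ha]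

theorem isCompact_mixtures (S : Finset 𝒜) : IsCompact (mixtures S) := by
  rw [mixtures_eq_inter]
  simp only [Set.ofPred_forall]
  exact (isCompact_stdSimplex ℝ 𝒜).inter_right <| isClosed_iInter fun a =>
    isClosed_iInter fun _ => isClosed_eq (continuous_apply a) continuous_const

theorem concaveOn_sum_mul {E ι : Type*} [AddCommMonoid E] [Module ℝ E] {Y : Set E}
    (hY : Convex ℝ Y) (s : Finset ι) {c : ι → ℝ} (hc : ∀ i, 0 ≤ c i) {f : ι → E → ℝ}
    (hf : ∀ i, ConcaveOn ℝ Y (f i)) : ConcaveOn ℝ Y fun y => ∑ i ∈ s, c i * f i y := by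
  classical
  induction s using Finset.induction_on with
  | empty => simpa using concaveOn_const 0 hY
  | insert i s hi ih =>
    refine (((hf i).smul (hc i)).add ih).congr fun y _ => ?_
    simp [sum_insert hi]

theorem exists_isSaddlePointOn_mixtures {M d : ℕ} (hS : (mixtures S).Nonempty)
    {Y : Set (Euc M)} (hYconv : Convex ℝ Y) (hYne : Y.Nonempty) (hYcomp : IsCompact Y)
    {L : 𝒜 → Euc M → Fin d → ℝ} (hLcont : ∀ a j, ContinuousOn (fun y => L a y j) Y)
    (hLconc : ∀ a j, ConcaveOn ℝ Y (fun y => L a y j)) {χ : Fin d → ℝ} (hχ : ∀ j, 0 ≤ χ j) :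
    ∃ p₀ ∈ mixtures S, ∃ y₀ ∈ Y, IsSaddlePointOn (mixtures S) Y
      (fun p y => ∑ j, χ j * ∑ a, p a * L a y j) p₀ y₀ := by
  set F : (𝒜 → ℝ) → Euc M → ℝ := fun p y => ∑ j, χ j * ∑ a, p a * L a y j
  have hFconv : ∀ y, ConvexOn ℝ (mixtures S) fun p => F p y := fun y =>
    ⟨convex_mixtures S, fun p _ q _ s t _ _ _ => le_of_eq <| by
      simp only [F, Pi.add_apply, Pi.smul_apply, smul_eq_mul, add_mul, sum_add_distrib, mul_add,
        mul_sum]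
      congr 1 <;> exact sum_congr rfl fun _ _ => sum_congr rfl fun _ _ => by ring⟩
  have hFconc : ∀ p ∈ mixtures S, ConcaveOn ℝ Y (F p) := fun p hp =>
    concaveOn_sum_mul hYconv _ hχ fun j => concaveOn_sum_mul hYconv _ hp.1 fun a => hLconc a j
  exact Sion.exists_isSaddlePointOn hS (convex_mixtures S) (isCompact_mixtures S)
    (fun y _ =>
      (by fun_prop : Continuous fun p => F p y).lowerSemicontinuous.lowerSemicontinuousOn _)
    (fun y _ => (hFconv y).quasiconvexOn) hYconv hYne hYcomp
    (fun p _ => (by fun_prop : ContinuousOn (F p) Y).upperSemicontinuousOn)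
    (fun p hp => (hFconc p hp).quasiconcaveOn)

theorem abs_sum_mul_le_of_mem_mixtures (hp : p ∈ mixtures S) {v : 𝒜 → ℝ} {C : ℝ}
    (hv : ∀ a ∈ S, |v a| ≤ C) : |∑ a, p a * v a| ≤ C :=
  abs_sum_mul_le_of_mem_stdSimplex (mem_stdSimplex_of_mem_mixtures hp) fun a ha =>
    hv a (mem_of_mem_mixtures_of_ne_zero hp ha)

theorem bddAbove_image_sInf_image_iSup {M d : ℕ} [Nonempty (Fin d)] (hS : (mixtures S).Nonempty)
    {Y : Set (Euc M)} {L : 𝒜 → Euc M → Fin d → ℝ} {C : ℝ}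
    (hLbdd : ∀ a ∈ S, ∀ y ∈ Y, ∀ j, |L a y j| ≤ C) :
    BddAbove ((fun y => sInf ((fun p => ⨆ j, ∑ a, p a * L a y j) '' mixtures S)) '' Y) := by
  obtain ⟨x, hx⟩ := hS
  obtain ⟨j₀⟩ : Nonempty (Fin d) := inferInstance
  have hexp : ∀ p ∈ mixtures S, ∀ y ∈ Y, ∀ j, |∑ a, p a * L a y j| ≤ C := fun p hp y hy j =>
    abs_sum_mul_le_of_mem_mixtures hp fun a ha => hLbdd a ha y hy j
  refine ⟨C, ?_⟩
  rintro _ ⟨y, hy, rfl⟩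
  refine csInf_le_of_le ⟨-C, ?_⟩ ⟨x, hx, rfl⟩ (ciSup_le fun j => le_of_abs_le (hexp x hx y hy j))
  rintro _ ⟨p, hp, rfl⟩
  exact (neg_le_of_abs_le (hexp p hp y hy j₀)).trans
    (le_ciSup (Set.finite_range fun j => ∑ a, p a * L a y j).bddAbove j₀)

theorem sum_mul_sum_mul_le_amfValueProb {M d : ℕ} [Nonempty (Fin d)] {Y : Set (Euc M)}
    (hYconv : Convex ℝ Y) (hYcomp : IsCompact Y) {L : 𝒜 → Euc M → Fin d → ℝ}
    (hLcont : ∀ a j, ContinuousOn (fun y => L a y j) Y)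
    (hLconc : ∀ a j, ConcaveOn ℝ Y (fun y => L a y j)) {C : ℝ}
    (hLbdd : ∀ a ∈ S, ∀ y ∈ Y, ∀ j, |L a y j| ≤ C) {χ : Fin d → ℝ}
    (hχ : χ ∈ stdSimplex ℝ (Fin d)) {x : 𝒜 → ℝ} (hx : x ∈ mixtures S)
    (hmin : ∀ p ∈ mixtures S, sSup ((fun y => ∑ j, χ j * ∑ a, x a * L a y j) '' Y) ≤
      sSup ((fun y => ∑ j, χ j * ∑ a, p a * L a y j) '' Y)) {y : Euc M} (hy : y ∈ Y) :
    ∑ j, χ j * ∑ a, x a * L a y j ≤ amfValueProb S Y L := by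
  set F : (𝒜 → ℝ) → Euc M → ℝ := fun p y => ∑ j, χ j * ∑ a, p a * L a y j
  obtain ⟨p₀, hp₀, y₀, hy₀, hsaddle⟩ := exists_isSaddlePointOn_mixtures ⟨x, hx⟩ hYconv ⟨y, hy⟩
    hYcomp hLcont hLconc hχ.1
  calc F x y ≤ sSup (F x '' Y) :=
        le_csSup (hYcomp.bddAbove_image (by fun_prop)) ⟨y, hy, rfl⟩
    _ ≤ sSup (F p₀ '' Y) := hmin p₀ hp₀
    _ ≤ F p₀ y₀ := csSup_le ⟨_, y, hy, rfl⟩ <| by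
        rintro _ ⟨y', hy', rfl⟩
        exact hsaddle p₀ hp₀ y' hy'
    _ ≤ sInf ((fun p => ⨆ j, ∑ a, p a * L a y₀ j) '' mixtures S) := le_csInf ⟨_, x, hx, rfl⟩ <| by
        rintro _ ⟨p, hp, rfl⟩
        exact (hsaddle p hp y₀ hy₀).trans (sum_mul_le_ciSup_of_mem_stdSimplex hχ _)
    _ ≤ amfValueProb S Y L := le_csSup (bddAbove_image_sInf_image_iSup ⟨x, hx⟩ hLbdd) ⟨y₀, hy₀, rfl⟩

end Minimax

theorem div_add_two_mul_eq_three_mul_sqrt {L T C η : ℝ} (hL : 0 < L) (hT : 0 < T) (hC : 0 < C)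
    (hη : η = √(L / (4 * T * C ^ 2))) : L / η + 2 * η * C ^ 2 * T = 3 * C * √(T * L) := by
  have hη' : η = √L / (2 * C * √T) := by
    rw [hη, sqrt_div hL.le, show 4 * T * C ^ 2 = (2 * C * √T) ^ 2 by
      rw [mul_pow, sq_sqrt hT.le]; ring, sqrt_sq (by positivity)]
  have hsqrtL : 0 < √L := sqrt_pos.2 hL
  rw [hη', sqrt_mul hT.le]
  nth_rewrite 1 [← sq_sqrt hL.le]
  nth_rewrite 3 [← sq_sqrt hT.le]
  field_simp
  ring

section Regret

variable {𝒜 : Type*} {T : ℕ} {ι : Type*} [Fintype ι]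

def pathValue (F : ∀ t : Fin T, (Fin t.1 → 𝒜) → 𝒜 → ℝ) (a : Fin T → 𝒜) (i : ℕ) : ℝ :=
  if hi : i < T then F ⟨i, hi⟩ (transcriptPrefix a ⟨i, hi⟩) (a ⟨i, hi⟩) else 0

theorem sum_range_pathValue (F : ∀ t : Fin T, (Fin t.1 → 𝒜) → 𝒜 → ℝ) (a : Fin T → 𝒜)
    {n : ℕ} (hn : n ≤ T) :
    ∑ i ∈ range n, pathValue F a i =
      ∑ s : Fin n, F ⟨s, s.2.trans_le hn⟩ (transcriptPrefix a _) (a ⟨s, s.2.trans_le hn⟩) := by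
  rw [← Fin.sum_univ_eq_sum_range]
  exact sum_congr rfl fun s _ => dif_pos _

/-- The weights `χ^t` of the statement at history `h` are `softmax η (cumulativeLoss ℓ t h)`. -/
def cumulativeLoss (ℓ : ∀ t : Fin T, (Fin t.1 → 𝒜) → 𝒜 → ι → ℝ) (t : Fin T)
    (h : Fin t.1 → 𝒜) (j : ι) : ℝ :=
  ∑ s : Fin t.1, ℓ ⟨s.1, s.2.trans t.2⟩ (historyPrefix h s) (h s) j

def weightedLoss (η : ℝ) (ℓ : ∀ t : Fin T, (Fin t.1 → 𝒜) → 𝒜 → ι → ℝ) (t : Fin T)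
    (h : Fin t.1 → 𝒜) (b : 𝒜) : ℝ :=
  ∑ j, softmax η (cumulativeLoss ℓ t h) j * ℓ t h b j

variable [Fintype 𝒜]

def lossDeviation (η : ℝ) (ℓ : ∀ t : Fin T, (Fin t.1 → 𝒜) → 𝒜 → ι → ℝ)
    (x : ∀ t : Fin T, (Fin t.1 → 𝒜) → 𝒜 → ℝ) (t : Fin T) (h : Fin t.1 → 𝒜) (b : 𝒜) : ℝ :=
  weightedLoss η ℓ t h b - ∑ b', x t h b' * weightedLoss η ℓ t h b'

theorem abs_lossDeviation_le [Nonempty ι] {η C : ℝ} {ℓ : ∀ t : Fin T, (Fin t.1 → 𝒜) → 𝒜 → ι → ℝ}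
    {x : ∀ t : Fin T, (Fin t.1 → 𝒜) → 𝒜 → ℝ} {t : Fin T} {h : Fin t.1 → 𝒜}
    (hx : x t h ∈ stdSimplex ℝ 𝒜) (hℓ : ∀ b, x t h b ≠ 0 → ∀ j, |ℓ t h b j| ≤ C) {b : 𝒜}
    (hb : x t h b ≠ 0) : |lossDeviation η ℓ x t h b| ≤ 2 * C := by
  have hwl : ∀ b, x t h b ≠ 0 → |weightedLoss η ℓ t h b| ≤ C := fun b hb =>
    abs_sum_mul_le_of_mem_stdSimplex (softmax_mem_stdSimplex η _) fun j _ => hℓ b hb j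
  have hmean := abs_sum_mul_le_of_mem_stdSimplex hx hwl
  exact (abs_sub _ _).trans (by linarith [hwl b hb])

theorem weightedLoss_le_add_lossDeviation {η : ℝ} {ℓ : ∀ t : Fin T, (Fin t.1 → 𝒜) → 𝒜 → ι → ℝ}
    {x : ∀ t : Fin T, (Fin t.1 → 𝒜) → 𝒜 → ℝ} {w : ∀ t : Fin T, (Fin t.1 → 𝒜) → ℝ} {t : Fin T}
    {h : Fin t.1 → 𝒜}
    (hround : ∑ j, softmax η (cumulativeLoss ℓ t h) j * ∑ b, x t h b * ℓ t h b j ≤ w t h)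
    (b : 𝒜) : weightedLoss η ℓ t h b ≤ w t h + lossDeviation η ℓ x t h b := by
  have hmean : ∑ b', x t h b' * weightedLoss η ℓ t h b' =
      ∑ j, softmax η (cumulativeLoss ℓ t h) j * ∑ b, x t h b * ℓ t h b j := by
    simp only [weightedLoss, mul_sum]
    rw [sum_comm]
    exact sum_congr rfl fun _ _ => sum_congr rfl fun _ _ => by ring
  rw [lossDeviation, hmean]
  linarith

theorem regret_le_sum_lossDeviation {d : ℕ} (hd : 1 ≤ d) {C : ℝ} (hC : 0 < C) (hT : 0 < T)
    {η : ℝ} (hη : η = √(log d / (4 * T * C ^ 2)))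
    {ℓ : ∀ t : Fin T, (Fin t.1 → 𝒜) → 𝒜 → Fin d → ℝ} {x : ∀ t : Fin T, (Fin t.1 → 𝒜) → 𝒜 → ℝ}
    {w : ∀ t : Fin T, (Fin t.1 → 𝒜) → ℝ}
    (hround : ∀ t h, ∑ j, softmax η (cumulativeLoss ℓ t h) j * ∑ b, x t h b * ℓ t h b j ≤ w t h)
    {a : Fin T → 𝒜} (hℓ : ∀ t j, |ℓ t (transcriptPrefix a t) (a t) j| ≤ C) (j : Fin d) :
    ∑ t, ℓ t (transcriptPrefix a t) (a t) j - ∑ t, w t (transcriptPrefix a t) ≤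
      3 * C * √(T * log d) + ∑ t, lossDeviation η ℓ x t (transcriptPrefix a t) (a t) := by
  have hstep := fun t => weightedLoss_le_add_lossDeviation (hround t (transcriptPrefix a t)) (a t)
  rcases hd.eq_or_lt with rfl | hd
  -- for `d = 1` we have `η = 0`, but the weights are identically `1`
  · simp only [weightedLoss, softmax_of_subsingleton, one_mul, Fin.sum_univ_one,
      Subsingleton.elim _ j] at hstep
    simp only [Nat.cast_one, log_one, mul_zero, sqrt_zero, zero_add, tsub_le_iff_right,
      ← sum_add_distrib]
    exact sum_le_sum fun t _ => by linarith [hstep t]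
  have : Nonempty (Fin d) := ⟨⟨0, by omega⟩⟩
  have hlog : 0 < log d := log_pos (by exact_mod_cast hd)
  have hηpos : 0 < η := by rw [hη]; positivity
  set ℓseq : ℕ → Fin d → ℝ := fun i j => pathValue (fun t h b => ℓ t h b j) a i
  set r : ℕ → ℝ := pathValue (fun t h b => w t h + lossDeviation η ℓ x t h b) a
  have hℓseq : ∀ i < T, ∀ j, |ℓseq i j| ≤ C := fun i hi j => by
    simp only [ℓseq, pathValue, dif_pos hi]; exact hℓ _ j
  have hr : ∀ i < T, ∑ j, softmax η (fun j => ∑ k ∈ range i, ℓseq k j) j * ℓseq i j ≤ r i := by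
    intro i hi
    have hcum : (fun j => ∑ k ∈ range i, ℓseq k j) =
        cumulativeLoss ℓ ⟨i, hi⟩ (transcriptPrefix a ⟨i, hi⟩) :=
      funext fun j => sum_range_pathValue _ a hi.le
    rw [hcum]
    simp only [ℓseq, r, pathValue, dif_pos hi]
    exact hstep ⟨i, hi⟩
  have hhedge := hedge_regret_le hηpos hℓseq hr j
  rw [sum_range_pathValue _ a le_rfl, sum_range_pathValue _ a le_rfl, sum_add_distrib,
    Fintype.card_fin] at hhedge
  simp only [Fin.eta] at hhedge
  linarith [div_add_two_mul_eq_three_mul_sqrt hlog (by exact_mod_cast hT) hC hη]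

end Regret

theorem sum_ite_regret_lt_le {𝒜 : Type*} [Fintype 𝒜] {T d : ℕ} (hd : 1 ≤ d) {C : ℝ}
    (hC : 0 < C) {η : ℝ} (hη : η = √(log d / (4 * T * C ^ 2)))
    (ℓ : ∀ t : Fin T, (Fin t.1 → 𝒜) → 𝒜 → Fin d → ℝ) (x : ∀ t : Fin T, (Fin t.1 → 𝒜) → 𝒜 → ℝ)
    (w : ∀ t : Fin T, (Fin t.1 → 𝒜) → ℝ) (hx : ∀ t h, x t h ∈ stdSimplex ℝ 𝒜)
    (hℓ : ∀ t h b, x t h b ≠ 0 → ∀ j, |ℓ t h b j| ≤ C)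
    (hround : ∀ t h, ∑ j, softmax η (cumulativeLoss ℓ t h) j * ∑ b, x t h b * ℓ t h b j ≤ w t h)
    {δ : ℝ} (hδ : δ ∈ Set.Ioo 0 1) :
    ∑ a : Fin T → 𝒜,
        (if 8 * C * √(T * log (d / δ)) <
            ⨆ j, (∑ t, ℓ t (transcriptPrefix a t) (a t) j - ∑ t, w t (transcriptPrefix a t))
          then transcriptProb x a else 0) ≤ δ := by
  have : Nonempty (Fin d) := ⟨⟨0, hd⟩⟩
  obtain rfl | hT := T.eq_zero_or_pos
  · simpa using hδ.1.le
  set γ := √(T * log (d / δ))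
  have hd' : (1 : ℝ) ≤ d := by exact_mod_cast hd
  have hlog : log d ≤ log (d / δ) := by
    rw [log_div (by positivity) hδ.1.ne']; linarith [log_neg hδ.1 hδ.2]
  have hγ : γ ^ 2 = T * log (d / δ) :=
    sq_sqrt (mul_nonneg (Nat.cast_nonneg _) ((log_nonneg hd').trans hlog))
  have hevent : ∀ a : Fin T → 𝒜,
      (if 8 * C * γ <
          ⨆ j, (∑ t, ℓ t (transcriptPrefix a t) (a t) j - ∑ t, w t (transcriptPrefix a t))
        then transcriptProb x a else 0) ≤
      if 5 * C * γ < ∑ t, lossDeviation η ℓ x t (transcriptPrefix a t) (a t)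
        then transcriptProb x a else 0 := by
    intro a
    by_cases hP : transcriptProb x a = 0
    · simp [hP]
    have hsupp := prod_ne_zero_iff.1 hP
    have hregret := ciSup_le fun j => regret_le_sum_lossDeviation hd hC hT hη hround
      (fun t j => hℓ t _ (a t) (hsupp t (mem_univ t)) j) j
    have : 3 * C * √(T * log d) ≤ 3 * C * γ := by
      gcongr; exact sqrt_le_sqrt (mul_le_mul_of_nonneg_left hlog (Nat.cast_nonneg _))
    split_ifs <;> first | linarith | exact le_rfl | exact prod_nonneg fun t _ => (hx _ _).1 _
  calc _ ≤ ∑ a : Fin T → 𝒜,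
        (if 5 * C * γ < ∑ t, lossDeviation η ℓ x t (transcriptPrefix a t) (a t)
          then transcriptProb x a else 0) := sum_le_sum fun a _ => hevent a
    _ ≤ exp (-((5 * C * γ) ^ 2 / (2 * (2 * C) ^ 2 * T))) :=
        sum_ite_lt_sum_le_exp x _ hx (fun t h => sum_mul_sub_sum_mul_eq_zero (hx t h).2 _)
          (fun t h b hb => abs_lossDeviation_le (hx t h) (hℓ t h) hb) (by positivity)
    _ ≤ exp (log δ) := by
        gcongr
        rw [mul_pow, mul_pow, hγ, log_div (by positivity) hδ.1.ne']
        field_simp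
        nlinarith [log_nonneg hd', log_neg hδ.1 hδ.2]
    _ = δ := exp_log hδ.1

theorem probabilistic_amf_high_probability_bound_general
    (𝒜 : Type) [Fintype 𝒜] (T d M : ℕ) (hd : 1 ≤ d) (C : ℝ) (hC : 0 < C)
    -- the adaptive Adversary's choice of environments, as a function of the realized history:
    (Af : ∀ t : Fin T, (Fin t.1 → 𝒜) → Finset 𝒜)
    (Ys : ∀ t : Fin T, (Fin t.1 → 𝒜) → Set (Euc M))
    (L : ∀ t : Fin T, (Fin t.1 → 𝒜) → 𝒜 → Euc M → Fin d → ℝ)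
    -- the adaptive Adversary's response `y^t` (it may depend on `x^t`, which is itself
    -- determined by the history, so a function of the history is fully general):
    (yc : ∀ t : Fin T, (Fin t.1 → 𝒜) → Euc M)
    (hYconv : ∀ t h, Convex ℝ (Ys t h)) (hYcomp : ∀ t h, IsCompact (Ys t h))
    (hLcont : ∀ t h a j, ContinuousOn (fun y => L t h a y j) (Ys t h))
    (hLconc : ∀ t h a j, ConcaveOn ℝ (Ys t h) (fun y => L t h a y j))
    (hLbdd : ∀ t h, ∀ a ∈ Af t h, ∀ y ∈ Ys t h, ∀ j, |L t h a y j| ≤ C)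
    (hyc : ∀ t h, yc t h ∈ Ys t h)
    (η : ℝ) (hη : η = Real.sqrt (Real.log d / (4 * T * C ^ 2)))
    -- the Learner's mixtures:
    (x : ∀ t : Fin T, (Fin t.1 → 𝒜) → 𝒜 → ℝ)
    (hxmix : ∀ t h, x t h ∈ mixtures (Af t h))
    -- the Learner plays minimax-optimally at every round: writing
    -- `χ^t_j ∝ exp(η Σ_{s<t} ℓ^s_j(a^s,y^s))` for the realized losses along the history,
    -- `x^t` minimizes `max_{y ∈ Y^t} Σ_j χ^t_j E_{a∼x}[ℓ^t_j(a,y)]` over all mixtures: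
    (hmin : ∀ t h, ∀ p ∈ mixtures (Af t h),
      sSup ((fun y => ∑ j : Fin d,
          (Real.exp (η * ∑ s : Fin t.1,
              L ⟨s.1, s.2.trans t.2⟩ (historyPrefix h s) (h s)
                (yc ⟨s.1, s.2.trans t.2⟩ (historyPrefix h s)) j) /
            ∑ i : Fin d, Real.exp (η * ∑ s : Fin t.1,
              L ⟨s.1, s.2.trans t.2⟩ (historyPrefix h s) (h s)
                (yc ⟨s.1, s.2.trans t.2⟩ (historyPrefix h s)) i)) *
          ∑ a, x t h a * L t h a y j) '' Ys t h)
        ≤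
      sSup ((fun y => ∑ j : Fin d,
          (Real.exp (η * ∑ s : Fin t.1,
              L ⟨s.1, s.2.trans t.2⟩ (historyPrefix h s) (h s)
                (yc ⟨s.1, s.2.trans t.2⟩ (historyPrefix h s)) j) /
            ∑ i : Fin d, Real.exp (η * ∑ s : Fin t.1,
              L ⟨s.1, s.2.trans t.2⟩ (historyPrefix h s) (h s)
                (yc ⟨s.1, s.2.trans t.2⟩ (historyPrefix h s)) i)) *
          ∑ a, p a * L t h a y j) '' Ys t h)) :
    -- high-probability AMF regret bound: the probability (over the Learner's realized
    -- outcomes) of the AMF regret exceeding `8C√(T ln(d/δ))` is at most `δ`: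
    ∀ δ ∈ Set.Ioo (0 : ℝ) 1,
      (∑ a : Fin T → 𝒜,
        if 8 * C * Real.sqrt (T * Real.log (d / δ)) <
            (⨆ j : Fin d, ((∑ t, L t (transcriptPrefix a t) (a t)
                  (yc t (transcriptPrefix a t)) j) -
              ∑ t, amfValueProb (Af t (transcriptPrefix a t)) (Ys t (transcriptPrefix a t))
                (L t (transcriptPrefix a t))))
        then (∏ t, x t (transcriptPrefix a t) (a t)) else 0) ≤ δ := by
  have : Nonempty (Fin d) := ⟨⟨0, hd⟩⟩
  intro δ hδ
  exact sum_ite_regret_lt_le hd hC hη (fun t h b j => L t h b (yc t h) j) x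
    (fun t h => amfValueProb (Af t h) (Ys t h) (L t h))
    (fun t h => mem_stdSimplex_of_mem_mixtures (hxmix t h))
    (fun t h b hb j => hLbdd t h b (mem_of_mem_mixtures_of_ne_zero (hxmix t h) hb) _ (hyc t h) j)
    (fun t h => sum_mul_sum_mul_le_amfValueProb (hYconv t h) (hYcomp t h) (hLcont t h)
      (hLconc t h) (hLbdd t h) (softmax_mem_stdSimplex η _) (hxmix t h) (hmin t h) (hyc t h))
    hδ

/-- **Theorem 2.8, high-probability bound for the probabilistic Learner.**
In the probabilistic AMF framework with `T ≥ ln d` and `η = √(ln d/(4TC²))`, a Learner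
playing a minimax-optimal mixture at every round guarantees, against any adaptive
Adversary: for any `δ ∈ (0,1)`, with probability at least `1−δ` over the randomness of the
realized outcomes, `max_j (Σ_t ℓ^t_j(a^t,y^t) − Σ_t w^t_A) ≤ 8C√(T ln(d/δ))`. -/
theorem probabilistic_amf_high_probability_bound
    (𝒜 : Type) [Fintype 𝒜] (T d M : ℕ) (hd : 1 ≤ d) (C : ℝ) (hC : 0 < C)
    -- the adaptive Adversary's choice of environments, as a function of the realized history:
    (Af : ∀ t : Fin T, (Fin t.1 → 𝒜) → Finset 𝒜)
    (Ys : ∀ t : Fin T, (Fin t.1 → 𝒜) → Set (Euc M))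
    (L : ∀ t : Fin T, (Fin t.1 → 𝒜) → 𝒜 → Euc M → Fin d → ℝ)
    -- the adaptive Adversary's response `y^t` (it may depend on `x^t`, which is itself
    -- determined by the history, so a function of the history is fully general):
    (yc : ∀ t : Fin T, (Fin t.1 → 𝒜) → Euc M)
    (hAf : ∀ t h, (Af t h).Nonempty)
    (hYconv : ∀ t h, Convex ℝ (Ys t h)) (hYcomp : ∀ t h, IsCompact (Ys t h))
    (hYne : ∀ t h, (Ys t h).Nonempty)
    (hLcont : ∀ t h a j, ContinuousOn (fun y => L t h a y j) (Ys t h))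
    (hLconc : ∀ t h a j, ConcaveOn ℝ (Ys t h) (fun y => L t h a y j))
    (hLbdd : ∀ t h, ∀ a ∈ Af t h, ∀ y ∈ Ys t h, ∀ j, |L t h a y j| ≤ C)
    (hyc : ∀ t h, yc t h ∈ Ys t h)
    (hT : Real.log d ≤ T)
    (η : ℝ) (hη : η = Real.sqrt (Real.log d / (4 * T * C ^ 2)))
    -- the Learner's mixtures:
    (x : ∀ t : Fin T, (Fin t.1 → 𝒜) → 𝒜 → ℝ)
    (hxmix : ∀ t h, x t h ∈ mixtures (Af t h))
    -- the Learner plays minimax-optimally at every round: writing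
    -- `χ^t_j ∝ exp(η Σ_{s<t} ℓ^s_j(a^s,y^s))` for the realized losses along the history,
    -- `x^t` minimizes `max_{y ∈ Y^t} Σ_j χ^t_j E_{a∼x}[ℓ^t_j(a,y)]` over all mixtures:
    (hmin : ∀ t h, ∀ p ∈ mixtures (Af t h),
      sSup ((fun y => ∑ j : Fin d,
          (Real.exp (η * ∑ s : Fin t.1,
              L ⟨s.1, s.2.trans t.2⟩ (historyPrefix h s) (h s)
                (yc ⟨s.1, s.2.trans t.2⟩ (historyPrefix h s)) j) /
            ∑ i : Fin d, Real.exp (η * ∑ s : Fin t.1,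
              L ⟨s.1, s.2.trans t.2⟩ (historyPrefix h s) (h s)
                (yc ⟨s.1, s.2.trans t.2⟩ (historyPrefix h s)) i)) *
          ∑ a, x t h a * L t h a y j) '' Ys t h)
        ≤
      sSup ((fun y => ∑ j : Fin d,
          (Real.exp (η * ∑ s : Fin t.1,
              L ⟨s.1, s.2.trans t.2⟩ (historyPrefix h s) (h s)
                (yc ⟨s.1, s.2.trans t.2⟩ (historyPrefix h s)) j) /
            ∑ i : Fin d, Real.exp (η * ∑ s : Fin t.1,
              L ⟨s.1, s.2.trans t.2⟩ (historyPrefix h s) (h s)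
                (yc ⟨s.1, s.2.trans t.2⟩ (historyPrefix h s)) i)) *
          ∑ a, p a * L t h a y j) '' Ys t h)) :
    -- high-probability AMF regret bound: the probability (over the Learner's realized
    -- outcomes) of the AMF regret exceeding `8C√(T ln(d/δ))` is at most `δ`:
    ∀ δ ∈ Set.Ioo (0 : ℝ) 1,
      (∑ a : Fin T → 𝒜,
        if 8 * C * Real.sqrt (T * Real.log (d / δ)) <
            (⨆ j : Fin d, ((∑ t, L t (transcriptPrefix a t) (a t)
                  (yc t (transcriptPrefix a t)) j) -
              ∑ t, amfValueProb (Af t (transcriptPrefix a t)) (Ys t (transcriptPrefix a t))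
                (L t (transcriptPrefix a t))))
        then (∏ t, x t (transcriptPrefix a t) (a t)) else 0) ≤ δ :=
  probabilistic_amf_high_probability_bound_general 𝒜 T d M hd C hC Af Ys L yc hYconv hYcomp hLcont
    hLconc hLbdd hyc η hη x hxmix hmin

end
end
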